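/- arXiv:1308.6678 — 8 statements merged into one kernel-verified Lean document; each statement's English description precedes it below -/
import Mathlib

section
/- A gap-critical graph has no simplicial vertex. -/
open SimpleGraph

/-- A set of vertices is independent (stable) if no two of its vertices are adjacent. -/
def SimpleGraph.IsStableSet {V : Type*} (G : SimpleGraph V) (s : Set V) : Prop :=
  s.Pairwise fun a b => ¬ G.Adj a b

/-- `θ(G)`: the minimum number of cliques needed to cover all vertices of `G`. -/
noncomputable def SimpleGraph.cliqueCoverNum {V : Type*} (G : SimpleGraph V) : ℕ :=
  sInf {n | ∃ C : Finset (Finset V), C.card = n ∧ (∀ s ∈ C, G.IsClique (s : Set V)) ∧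
    ∀ v : V, ∃ s ∈ C, v ∈ s}

/-- `α(G)`: the maximum size of a stable (independent) set of `G`. -/
noncomputable def SimpleGraph.stableNum {V : Type*} (G : SimpleGraph V) : ℕ :=
  sSup {n | ∃ s : Finset V, G.IsStableSet (s : Set V) ∧ s.card = n}

/-- `gap(G) = θ(G) - α(G)`. -/
noncomputable def SimpleGraph.gap {V : Type*} (G : SimpleGraph V) : ℤ :=
  (G.cliqueCoverNum : ℤ) - (G.stableNum : ℤ)

/-- A graph is gap-critical if deleting any vertex strictly decreases the gap. -/
def SimpleGraph.IsGapCritical {V : Type*} (G : SimpleGraph V) : Prop :=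
  ∀ v : V, (G.induce {w | w ≠ v}).gap < G.gap

section Aux

variable {V : Type*} [Fintype V]

/-- The set of cover sizes in the def of `cliqueCoverNum`. -/
def coverSet {W : Type*} (G : SimpleGraph W) : Set ℕ :=
  {n | ∃ C : Finset (Finset W), C.card = n ∧ (∀ s ∈ C, G.IsClique (s : Set W)) ∧
    ∀ v : W, ∃ s ∈ C, v ∈ s}

def stabSet {W : Type*} (G : SimpleGraph W) : Set ℕ :=
  {n | ∃ s : Finset W, G.IsStableSet (s : Set W) ∧ s.card = n}

lemma cliqueCoverNum_eq {W : Type*} (G : SimpleGraph W) :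
    G.cliqueCoverNum = sInf (coverSet G) := rfl

lemma stableNum_eq {W : Type*} (G : SimpleGraph W) :
    G.stableNum = sSup (stabSet G) := rfl

lemma coverSet_nonempty {W : Type*} [Fintype W] (G : SimpleGraph W) :
    (coverSet G).Nonempty := by
  classical
  refine ⟨((Finset.univ : Finset W).image (fun v => ({v} : Finset W))).card,
    (Finset.univ : Finset W).image (fun v => {v}), rfl, ?_, ?_⟩
  · rintro s hs
    simp only [Finset.mem_image] at hs
    obtain ⟨v, -, rfl⟩ := hs
    simp [SimpleGraph.IsClique]
  · intro v
    exact ⟨{v}, by simp, by simp⟩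

lemma stabSet_nonempty {W : Type*} (G : SimpleGraph W) : (stabSet G).Nonempty :=
  ⟨0, ∅, by simp [SimpleGraph.IsStableSet], by simp⟩

lemma stabSet_bddAbove {W : Type*} [Fintype W] (G : SimpleGraph W) :
    BddAbove (stabSet G) := by
  refine ⟨Fintype.card W, ?_⟩
  rintro n ⟨s, -, rfl⟩
  exact Finset.card_le_univ s

/-- There is a minimum clique cover. -/
lemma exists_min_cover {W : Type*} [Fintype W] (G : SimpleGraph W) :
    ∃ C : Finset (Finset W), C.card = G.cliqueCoverNum ∧
      (∀ s ∈ C, G.IsClique (s : Set W)) ∧ ∀ v : W, ∃ s ∈ C, v ∈ s := by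
  have := Nat.sInf_mem (coverSet_nonempty G)
  obtain ⟨C, h1, h2, h3⟩ := this
  exact ⟨C, h1, h2, h3⟩

/-- There is a maximum stable set. -/
lemma exists_max_stable {W : Type*} [Fintype W] (G : SimpleGraph W) :
    ∃ s : Finset W, G.IsStableSet (s : Set W) ∧ s.card = G.stableNum := by
  have := Nat.sSup_mem (stabSet_nonempty G) (stabSet_bddAbove G)
  obtain ⟨s, h1, h2⟩ := this
  exact ⟨s, h1, h2⟩

lemma cliqueCoverNum_le {W : Type*} (G : SimpleGraph W) (C : Finset (Finset W))
    (hcl : ∀ s ∈ C, G.IsClique (s : Set W)) (hcov : ∀ v : W, ∃ s ∈ C, v ∈ s) :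
    G.cliqueCoverNum ≤ C.card :=
  Nat.sInf_le ⟨C, rfl, hcl, hcov⟩

lemma le_stableNum {W : Type*} [Fintype W] (G : SimpleGraph W) (s : Finset W)
    (hst : G.IsStableSet (s : Set W)) : s.card ≤ G.stableNum :=
  le_csSup (stabSet_bddAbove G) ⟨s, hst, rfl⟩

variable (G : SimpleGraph V) (u : V)

/-- Images of cliques of an induced subgraph are cliques. -/
lemma image_clique {P : Set V} (s : Finset P) (hs : (G.induce P).IsClique (s : Set P)) :
    haveI := Classical.decEq V
    G.IsClique ((s.image Subtype.val : Finset V) : Set V) := by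
  classical
  intro a ha b hb hab
  simp only [Finset.coe_image, Set.mem_image, Finset.mem_coe] at ha hb
  obtain ⟨a', ha', rfl⟩ := ha
  obtain ⟨b', hb', rfl⟩ := hb
  have : a' ≠ b' := fun h => hab (by rw [h])
  exact hs ha' hb' this

/-- θ(G) ≤ θ(G - u) + 1. -/
lemma cliqueCoverNum_delete_ge : G.cliqueCoverNum ≤ (G.induce {w | w ≠ u}).cliqueCoverNum + 1 := by
  classical
  haveI : Fintype {w | w ≠ u} := Subtype.fintype _
  obtain ⟨C, hcard, hcl, hcov⟩ := exists_min_cover (G.induce {w | w ≠ u})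
  set D : Finset (Finset V) := insert {u} (C.image (Finset.image Subtype.val)) with hD
  have hle : G.cliqueCoverNum ≤ D.card := by
    refine cliqueCoverNum_le G D ?_ ?_
    · intro s hs
      rcases Finset.mem_insert.1 hs with h | h
      · subst h; simp [SimpleGraph.IsClique]
      · obtain ⟨t, ht, rfl⟩ := Finset.mem_image.1 h
        exact image_clique G t (hcl t ht)
    · intro v
      by_cases hv : v = u
      · exact ⟨{u}, Finset.mem_insert_self _ _, by simp [hv]⟩
      · obtain ⟨t, ht, hvt⟩ := hcov ⟨v, hv⟩
        refine ⟨t.image Subtype.val, Finset.mem_insert_of_mem (Finset.mem_image_of_mem _ ht), ?_⟩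
        exact Finset.mem_image_of_mem _ hvt
  calc G.cliqueCoverNum ≤ D.card := hle
    _ ≤ (C.image (Finset.image Subtype.val)).card + 1 := Finset.card_insert_le _ _
    _ ≤ C.card + 1 := by gcongr; exact Finset.card_image_le
    _ = (G.induce {w | w ≠ u}).cliqueCoverNum + 1 := by rw [hcard]

/-- α(G - u) ≤ α(G). -/
lemma stableNum_delete_le : (G.induce {w | w ≠ u}).stableNum ≤ G.stableNum := by
  classical
  haveI : Fintype {w | w ≠ u} := Subtype.fintype _
  obtain ⟨s, hst, hcard⟩ := exists_max_stable (G.induce {w | w ≠ u})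
  rw [← hcard]
  have : s.card = (s.image Subtype.val).card :=
    (Finset.card_image_of_injective _ Subtype.val_injective).symm
  rw [this]
  refine le_stableNum G _ ?_
  intro a ha b hb hab
  simp only [Finset.coe_image, Set.mem_image, Finset.mem_coe] at ha hb
  obtain ⟨a', ha', rfl⟩ := ha
  obtain ⟨b', hb', rfl⟩ := hb
  have hne : a' ≠ b' := fun h => hab (by rw [h])
  have := hst ha' hb' hne
  simpa using this

end Aux

/-- A gap-critical graph has no simplicial vertex (a vertex whose neighborhood is a clique). -/
theorem gapCritical_no_simplicial {V : Type*} [Fintype V] (G : SimpleGraph V)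
    (hG : G.IsGapCritical) : ¬ ∃ v : V, G.IsClique (G.neighborSet v) := by
  classical
  rintro ⟨v, hv⟩
  by_cases hiso : ∃ u, G.Adj v u
  · -- v has a neighbor u; use criticality at u
    obtain ⟨u, hadj⟩ := hiso
    have hvu : v ≠ u := G.ne_of_adj hadj
    have hcrit := hG u
    set H := G.induce {w | w ≠ u} with hHdef
    have halpha : H.stableNum ≤ G.stableNum := stableNum_delete_le G u
    -- θ(H) < θ(G)
    have htheta : H.cliqueCoverNum < G.cliqueCoverNum := by
      have h1 : (H.cliqueCoverNum : ℤ) - H.stableNum < G.cliqueCoverNum - G.stableNum := hcrit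
      have h3 : (H.stableNum : ℤ) ≤ G.stableNum := by exact_mod_cast halpha
      have : (H.cliqueCoverNum : ℤ) < G.cliqueCoverNum := by linarith
      exact_mod_cast this
    haveI : Fintype {w | w ≠ u} := Subtype.fintype _
    -- take a minimum cover of H and absorb u into the clique containing v
    obtain ⟨C, hcard, hcl, hcov⟩ := exists_min_cover H
    obtain ⟨s, hsC, hvs⟩ := hcov ⟨v, hvu⟩
    set K : Finset V := s.image Subtype.val with hK
    have hKmem : K ∈ C.image (Finset.image Subtype.val) := Finset.mem_image_of_mem _ hsC
    -- every element of K is v or a neighbor of v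
    have hKnb : ∀ x ∈ K, x = v ∨ G.Adj v x := by
      intro x hx
      obtain ⟨x', hx', rfl⟩ := Finset.mem_image.1 hx
      by_cases hxv : (x' : V) = v
      · exact Or.inl hxv
      · right
        have hne : x' ≠ (⟨v, hvu⟩ : {w | w ≠ u}) := fun h => hxv (congrArg Subtype.val h)
        have := hcl s hsC (Finset.mem_coe.2 hvs) (Finset.mem_coe.2 hx') (Ne.symm hne)
        simpa [hHdef] using this
    -- insert u K is a clique of G
    have hclK : G.IsClique ((insert u K : Finset V) : Set V) := by
      intro a ha b hb hab
      simp only [Finset.coe_insert, Set.mem_insert_iff, Finset.mem_coe] at ha hb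
      have key : ∀ x ∈ K, x ≠ u → G.Adj u x := by
        intro x hx hxu
        rcases hKnb x hx with rfl | hx'
        · exact hadj.symm
        · have hu : u ∈ G.neighborSet v := hadj
          have hx'' : x ∈ G.neighborSet v := hx'
          exact hv hu hx'' (Ne.symm hxu)
      rcases ha with rfl | ha
      · rcases hb with rfl | hb
        · exact absurd rfl hab
        · exact key b hb (Ne.symm hab)
      · rcases hb with rfl | hb
        · exact (key a ha hab).symm
        · -- both in K
          have hcl' := image_clique G s (hcl s hsC)
          exact hcl' (by simpa [hK] using ha) (by simpa [hK] using hb) hab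
    set D : Finset (Finset V) :=
      insert (insert u K) ((C.image (Finset.image Subtype.val)).erase K) with hD
    have hDcover : ∀ w : V, ∃ t ∈ D, w ∈ t := by
      intro w
      by_cases hw : w = u
      · exact ⟨insert u K, Finset.mem_insert_self _ _, by simp [hw]⟩
      · obtain ⟨t, htC, hwt⟩ := hcov ⟨w, hw⟩
        have hwimg : w ∈ t.image Subtype.val := Finset.mem_image_of_mem _ hwt
        by_cases hteq : t.image Subtype.val = K
        · exact ⟨insert u K, Finset.mem_insert_self _ _,
            Finset.mem_insert_of_mem (hteq ▸ hwimg)⟩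
        · exact ⟨t.image Subtype.val,
            Finset.mem_insert_of_mem (Finset.mem_erase.2 ⟨hteq, Finset.mem_image_of_mem _ htC⟩),
            hwimg⟩
    have hDclique : ∀ t ∈ D, G.IsClique (t : Set V) := by
      intro t ht
      rcases Finset.mem_insert.1 ht with rfl | ht
      · exact hclK
      · obtain ⟨t', ht', rfl⟩ := Finset.mem_image.1 (Finset.mem_of_mem_erase ht)
        exact image_clique G t' (hcl t' ht')
    have hDcard : D.card ≤ H.cliqueCoverNum := by
      calc D.card ≤ ((C.image (Finset.image Subtype.val)).erase K).card + 1 :=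
            Finset.card_insert_le _ _
        _ = (C.image (Finset.image Subtype.val)).card - 1 + 1 := by
            rw [Finset.card_erase_of_mem hKmem]
        _ ≤ (C.image (Finset.image Subtype.val)).card := by
            have : 1 ≤ (C.image (Finset.image Subtype.val)).card :=
              Finset.card_pos.2 ⟨K, hKmem⟩
            omega
        _ ≤ C.card := Finset.card_image_le
        _ = H.cliqueCoverNum := hcard
    have : G.cliqueCoverNum ≤ D.card := cliqueCoverNum_le G D hDclique hDcover
    omega
  · -- v is isolated; use criticality at v
    push_neg at hiso
    have hcrit := hG v
    set H := G.induce {w | w ≠ v} with hHdef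
    have htheta : G.cliqueCoverNum ≤ H.cliqueCoverNum + 1 := cliqueCoverNum_delete_ge G v
    have halpha : G.stableNum ≤ H.stableNum := by
      have h1 : (H.cliqueCoverNum : ℤ) - H.stableNum < G.cliqueCoverNum - G.stableNum := hcrit
      have h2 : (G.cliqueCoverNum : ℤ) ≤ H.cliqueCoverNum + 1 := by exact_mod_cast htheta
      have : (G.stableNum : ℤ) < H.stableNum + 1 := by linarith
      exact_mod_cast Int.lt_add_one_iff.1 this
    haveI : Fintype {w | w ≠ v} := Subtype.fintype _
    obtain ⟨s, hst, hcard⟩ := exists_max_stable H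
    set T : Finset V := insert v (s.image Subtype.val) with hT
    have hvnotmem : v ∉ s.image Subtype.val := by
      intro h
      obtain ⟨x, -, hx⟩ := Finset.mem_image.1 h
      exact x.2 hx
    have hTstable : G.IsStableSet (T : Set V) := by
      intro a ha b hb hab
      simp only [hT, Finset.coe_insert, Set.mem_insert_iff, Finset.mem_coe] at ha hb
      rcases ha with rfl | ha
      · rcases hb with rfl | hb
        · exact absurd rfl hab
        · exact hiso b
      · rcases hb with rfl | hb
        · exact fun h => hiso a h.symm
        · obtain ⟨a', ha', rfl⟩ := Finset.mem_image.1 ha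
          obtain ⟨b', hb', rfl⟩ := Finset.mem_image.1 hb
          have hne : a' ≠ b' := fun h => hab (by rw [h])
          have := hst ha' hb' hne
          simpa [hHdef] using this
    have hTcard : T.card = H.stableNum + 1 := by
      rw [hT, Finset.card_insert_of_notMem hvnotmem,
        Finset.card_image_of_injective _ Subtype.val_injective, hcard]
    have := le_stableNum G T hTstable
    omega
end

section
/- Every graph on at least 10 vertices contains a clique on four vertices, or a stable set on four vertices, or two vertex-disjoint triangles. -/
/-!
Suppose `G` has no `K₄`, no stable set of size four and no two disjoint triangles, so that its
triangles pairwise meet. Since `R(3, 4) = 9`, every nine vertices span a triangle, hence every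
vertex is avoided by some triangle. Playing these triangles against each other produces an
"eared triangle": a triangle `p₀ p₁ p₂` together with vertices `eᵢ` such that each `eᵢ pⱼ pₖ`
is a triangle as well. Every triangle then meets it in at least two corners, so removing two
corners leaves a triangle-free graph and `|V| = 10`. Let `Z` be the four remaining vertices and
`Nᵢ` the neighbours of `eᵢ` in `Z`. As there is no stable set `{z, e₀, e₁, e₂}`, `{pⱼ} ∪ Nᵢ`
(`j ≠ i`) or `{pᵢ, eᵢ, x, y}` (`x, y ∈ Z \ Nᵢ`), the `Nᵢ` cover `Z` and each of them is a
non-adjacent pair whose complement in `Z` is an edge. No triangle-free graph on four vertices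
admits three such pairs.
-/

open SimpleGraph

open Finset

namespace SimpleGraph

variable {V : Type*} {G : SimpleGraph V}

lemma IsClique.card_lt_of_cliqueFreeOn {s : Set V} {t : Finset V} {n : ℕ}
    (ht : G.IsClique (t : Set V)) (hts : (t : Set V) ⊆ s) (h : G.CliqueFreeOn s n) : #t < n := by
  by_contra! hn
  obtain ⟨u, hut, hu⟩ := exists_subset_card_eq hn
  exact h ((coe_subset.2 hut).trans hts) ⟨ht.subset (by simpa using hut), hu⟩

lemma IsClique.card_lt_of_cliqueFree {s : Finset V} {n : ℕ} (hs : G.IsClique (s : Set V))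
    (h : G.CliqueFree n) : #s < n :=
  hs.card_lt_of_cliqueFreeOn (Set.subset_univ _) h.cliqueFreeOn

lemma compl_induce (s : Set V) : (G.induce s)ᶜ = Gᶜ.induce s := by
  ext a b
  simp [Subtype.ext_iff]

section Ramsey

variable {W : Type*} [Fintype W] {H : SimpleGraph W}

lemma degree_lt_of_cliqueFree_compl [DecidableRel H.Adj] (h₃ : H.CliqueFree 3) {k : ℕ}
    (hk : Hᶜ.CliqueFree k) (v : W) : H.degree v < k := by
  rw [← card_neighborFinset_eq_degree]
  refine IsClique.card_lt_of_cliqueFree ?_ hk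
  rw [isClique_compl, coe_neighborFinset]
  exact isIndepSet_neighborSet_of_triangleFree _ h₃ v

lemma card_le_five_of_cliqueFree (h : H.CliqueFree 3) (hc : Hᶜ.CliqueFree 3) :
    Fintype.card W ≤ 5 := by
  classical
  rcases isEmpty_or_nonempty W with _ | ⟨⟨v⟩⟩
  · simp
  have h₁ := degree_lt_of_cliqueFree_compl h hc v
  have h₂ := degree_lt_of_cliqueFree_compl hc (by rwa [compl_compl]) v
  rw [degree_compl] at h₂
  omega

lemma card_le_eight_of_cliqueFree (h : H.CliqueFree 3) (hc : Hᶜ.CliqueFree 4) :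
    Fintype.card W ≤ 8 := by
  classical
  by_contra! h₉
  -- on nine vertices, neighbourhoods have at most 3 and non-neighbourhoods at most 5 vertices,
  -- so the graph would be 3-regular of odd order
  have hdeg : ∀ v, H.degree v = 3 ∧ Fintype.card W = 9 := by
    intro v
    have hN := degree_lt_of_cliqueFree_compl h hc v
    have hM : Fintype.card (Hᶜ.neighborSet v) ≤ 5 := by
      convert card_le_five_of_cliqueFree (H := H.induce (Hᶜ.neighborSet v))
        ((cliqueFree_induce_iff _ _ _).2 h.cliqueFreeOn)
        (by
          rw [compl_induce, cliqueFree_induce_iff]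
          simpa using CliqueFreeOn.of_succ _ ((cliqueFreeOn_univ _).2 hc) (Set.mem_univ v))
    rw [card_neighborSet_eq_degree, degree_compl] at hM
    omega
  obtain ⟨v⟩ : Nonempty W := Fintype.card_pos_iff.1 (by omega)
  have heven : Even (Fintype.card W) := by
    simpa [fun v => (hdeg v).1, show Odd 3 by decide] using H.even_card_odd_degree_vertices
  rw [(hdeg v).2] at heven
  exact absurd heven (by decide)

end Ramsey

lemma card_le_eight_of_cliqueFreeOn {s : Finset V} (h : G.CliqueFreeOn s 3)
    (hc : Gᶜ.CliqueFreeOn s 4) : #s ≤ 8 := by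
  classical
  simpa using card_le_eight_of_cliqueFree (H := G.induce s) ((cliqueFree_induce_iff _ _ _).2 h)
    (by rwa [compl_induce, cliqueFree_induce_iff])

lemma exists_isNClique_three_notMem [Fintype V] (hc : Gᶜ.CliqueFree 4)
    (hV : 10 ≤ Fintype.card V) (v : V) : ∃ t, G.IsNClique 3 t ∧ v ∉ t := by
  classical
  by_contra! h
  have := card_le_eight_of_cliqueFreeOn (s := univ.erase v)
    (fun t ht htc => by simpa using ht (h t htc)) hc.cliqueFreeOn
  rw [card_erase_of_mem (mem_univ v), card_univ] at this
  omega

lemma inter_nonempty_of_isIndepSet_of_isClique_sdiff [DecidableEq V] {Z A B : Finset V}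
    (hZ : #Z = 4) (hA : A ⊆ Z) (hB : B ⊆ Z) (hA₂ : #A = 2) (hB₂ : #B = 2)
    (hAind : G.IsIndepSet (A : Set V)) (hBcl : G.IsClique (↑(Z \ B) : Set V)) :
    (A ∩ B).Nonempty := by
  by_contra hAB
  have hA' : A = Z \ B := eq_of_subset_of_card_le
    (fun x hx => mem_sdiff.2 ⟨hA hx, fun hx' => hAB ⟨x, mem_inter.2 ⟨hx, hx'⟩⟩⟩)
    (by rw [card_sdiff_of_subset hB, hZ, hA₂, hB₂])
  obtain ⟨a, b, hab, rfl⟩ := card_eq_two.1 hA₂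
  exact hAind (by simp) (by simp) hab (hBcl (by simp [← hA']) (by simp [← hA']) hab)

lemma card_ne_four_of_cover [DecidableEq V] {Z : Finset V} (hZ₃ : G.CliqueFreeOn Z 3)
    (N : Fin 3 → Finset V) (hNZ : ∀ i, N i ⊆ Z) (hN₂ : ∀ i, #(N i) ≤ 2)
    (hNind : ∀ i, G.IsIndepSet (N i : Set V)) (hNcl : ∀ i, G.IsClique (↑(Z \ N i) : Set V))
    (hcov : ∀ z ∈ Z, ∃ i, z ∈ N i) : #Z ≠ 4 := by
  intro hZ
  have hcard : ∀ i, #(N i) = 2 := fun i => by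
    have := (hNcl i).card_lt_of_cliqueFreeOn (by simp) hZ₃
    rw [card_sdiff_of_subset (hNZ i), hZ] at this
    have := hN₂ i
    omega
  have hpair {i x y} (hx : x ∈ N i) (hy : y ∈ N i) (hxy : x ≠ y) : N i = {x, y} :=
    (eq_of_subset_of_card_le (by simp [insert_subset_iff, hx, hy])
      (by rw [hcard, card_pair hxy])).symm
  have hmeet (i j) : ∃ x, x ∈ N i ∧ x ∈ N j := by
    simpa [Finset.Nonempty] using inter_nonempty_of_isIndepSet_of_isClique_sdiff hZ (hNZ i)
      (hNZ j) (hcard i) (hcard j) (hNind i) (hNcl j)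
  suffices ∃ x S, #S ≤ 2 ∧ ∀ i, N i ⊆ insert x S by
    obtain ⟨x, S, hS, hNS⟩ := this
    have hZS : Z ⊆ insert x S := fun z hz => (hcov z hz).elim fun i hi => hNS i hi
    have := (card_le_card hZS).trans (card_insert_le x S)
    omega
  obtain ⟨x, hx₀, hx₁⟩ := hmeet 0 1
  by_cases hx₂ : x ∈ N 2
  · -- a non-edge `y y'` of `Z \ {x}` meets every `N i`, so that `N i ⊆ {x, y, y'}`
    have hx (i) : x ∈ N i := by fin_cases i <;> assumption
    obtain ⟨y, hy, y', hy', hyy', hnadj⟩ :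
        ∃ y ∈ Z.erase x, ∃ y' ∈ Z.erase x, y ≠ y' ∧ ¬G.Adj y y' := by
      by_contra! h
      refine hZ₃ (by simp) ⟨fun y hy y' hy' => h y hy y' hy', ?_⟩
      rw [card_erase_of_mem (hNZ 0 hx₀), hZ]
    refine ⟨x, {y, y'}, card_le_two, fun i => ?_⟩
    have hyi : y ∈ N i ∨ y' ∈ N i := by
      by_contra! h
      exact hnadj (hNcl i (by simp [h.1, mem_of_mem_erase hy])
        (by simp [h.2, mem_of_mem_erase hy']) hyy')
    rcases hyi with h | h
    · rw [hpair (hx i) h (ne_of_mem_erase hy).symm]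
      simp [insert_subset_iff]
    · rw [hpair (hx i) h (ne_of_mem_erase hy').symm]
      simp [insert_subset_iff]
  · obtain ⟨y, hy₀, hy₂⟩ := hmeet 0 2
    obtain ⟨y', hy₁, hy₂'⟩ := hmeet 1 2
    refine ⟨x, N 2, (hcard 2).le, fun i => ?_⟩
    match i with
    | 0 =>
      rw [hpair hx₀ hy₀ (by rintro rfl; exact hx₂ hy₂)]
      simp [insert_subset_iff, hy₂]
    | 1 =>
      rw [hpair hx₁ hy₁ (by rintro rfl; exact hx₂ hy₂')]
      simp [insert_subset_iff, hy₂']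
    | 2 => exact subset_insert _ _

structure EaredTriangle (G : SimpleGraph V) where
  p : Fin 3 → V
  e : Fin 3 → V
  adj_p : ∀ i j, i ≠ j → G.Adj (p i) (p j)
  adj_e : ∀ i j, i ≠ j → G.Adj (e i) (p j)
  e_ne_p : ∀ i, e i ≠ p i

namespace EaredTriangle

section Existence

variable [DecidableEq V]

lemma nonempty_of_forall_exists_adj {s : Finset V} (hs : G.IsNClique 3 s)
    (hear : ∀ v ∈ s, ∃ w ∉ s, ∀ u ∈ s, u ≠ v → G.Adj w u) : Nonempty G.EaredTriangle := by
  obtain ⟨x, y, z, hxy, hxz, hyz, rfl⟩ := is3Clique_iff.1 hs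
  let p := ![x, y, z]
  have hp : ∀ i j, i ≠ j → G.Adj (p i) (p j) := by
    intro i j hij
    fin_cases i <;> fin_cases j <;> simp_all [p, G.adj_comm]
  have he : ∀ i, ∃ w ∉ ({x, y, z} : Finset V), ∀ j, j ≠ i → G.Adj w (p j) := by
    intro i
    obtain ⟨w, hw, hwadj⟩ := hear (p i) (by fin_cases i <;> simp [p])
    refine ⟨w, hw, fun j hji => hwadj _ (by fin_cases j <;> simp [p]) (hp j i hji).ne⟩
  choose e he using he
  refine ⟨⟨p, e, hp, fun i j hij => (he i).2 j hij.symm, fun i h => (he i).1 ?_⟩⟩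
  rw [h]
  fin_cases i <;> simp [p]

lemma nonempty_of_inter_eq_singleton (hmeet : (G.cliqueSet 3).Intersecting)
    {s t u : Finset V} {v : V} (hs : G.IsNClique 3 s) (ht : G.IsNClique 3 t) (hst : s ∩ t = {v})
    (hu : G.IsNClique 3 u) (hvu : v ∉ u) : Nonempty G.EaredTriangle := by
  -- `u` meets `s` in `a` and `t` in `c`: the triangle `v a c` has the ears `w` on `a c`,
  -- `d` on `v c` and `b` on `v a`
  obtain ⟨a, has, hau⟩ := not_disjoint_iff.1 (hmeet hs hu)
  obtain ⟨c, hct, hcu⟩ := not_disjoint_iff.1 (hmeet ht hu)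
  have hmem {x} (hxs : x ∈ s) (hxt : x ∈ t) : x = v := by
    simpa [hst] using mem_inter.2 ⟨hxs, hxt⟩
  obtain ⟨hvs, hvt⟩ : v ∈ s ∧ v ∈ t := by simp [← mem_inter, hst]
  have hthird {r : Finset V} (hr : G.IsNClique 3 r) (x y : V) : ∃ z ∈ r, z ∉ ({x, y} : Finset V) :=
    exists_mem_notMem_of_card_lt_card (card_le_two.trans_lt (by rw [hr.card_eq]; norm_num))
  obtain ⟨b, hbs, hb⟩ := hthird hs v a
  obtain ⟨d, hdt, hd⟩ := hthird ht v c
  obtain ⟨w, hwu, hw⟩ := hthird hu a c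
  simp only [mem_insert, mem_singleton, not_or] at hb hd hw
  have hav : a ≠ v := by rintro rfl; exact hvu hau
  have hcv : c ≠ v := by rintro rfl; exact hvu hcu
  have hac : a ≠ c := by rintro rfl; exact hav (hmem has hct)
  have hva : G.Adj v a := hs.1 hvs has hav.symm
  have hvc : G.Adj v c := ht.1 hvt hct hcv.symm
  have hac' : G.Adj a c := hu.1 hau hcu hac
  have hwa : G.Adj w a := hu.1 hwu hau hw.1
  have hwc : G.Adj w c := hu.1 hwu hcu hw.2
  have hdv : G.Adj d v := ht.1 hdt hvt hd.1
  have hdc : G.Adj d c := ht.1 hdt hct hd.2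
  have hbv : G.Adj b v := hs.1 hbs hvs hb.1
  have hba : G.Adj b a := hs.1 hbs has hb.2
  refine ⟨⟨![v, a, c], ![w, d, b], ?_, ?_, ?_⟩⟩ <;> intro i
  · intro j hij
    fin_cases i <;> fin_cases j <;> simp_all [G.adj_comm]
  · intro j hij
    fin_cases i <;> fin_cases j <;> simp_all [G.adj_comm]
  · fin_cases i
    · rintro rfl; exact hvu hwu
    · rintro rfl; exact hav (hmem has hdt)
    · rintro rfl; exact hcv (hmem hbs hct)

lemma nonempty [Nonempty V] (hmeet : (G.cliqueSet 3).Intersecting)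
    (havoid : ∀ v, ∃ t, G.IsNClique 3 t ∧ v ∉ t) : Nonempty G.EaredTriangle := by
  choose t ht hvt using havoid
  obtain ⟨v₀⟩ := ‹Nonempty V›
  -- either the triangle avoiding each vertex of `t v₀` contains the two others, or one of them
  -- meets `t v₀` in a single vertex
  by_cases hears : ∀ v ∈ t v₀, (t v₀).erase v ⊆ t v
  · refine nonempty_of_forall_exists_adj (ht v₀) fun v hv => ?_
    obtain ⟨w, hw, hwv⟩ := exists_mem_notMem_of_card_lt_card (s := (t v₀).erase v) (t := t v)
      (by rw [card_erase_of_mem hv, (ht v₀).card_eq, (ht v).card_eq]; norm_num)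
    have hws : w ∉ t v₀ := fun h => hwv (mem_erase.2 ⟨fun hwv => hvt v (hwv ▸ hw), h⟩)
    exact ⟨w, hws, fun u hu huv =>
      (ht v).1 hw (hears v hv (mem_erase.2 ⟨huv, hu⟩)) fun h => hws (h ▸ hu)⟩
  push Not at hears
  obtain ⟨v, hv, hsub⟩ := hears
  obtain ⟨x, hx⟩ : ∃ x, t v₀ ∩ t v = {x} := by
    refine card_eq_one.1 (le_antisymm ?_ (card_pos.2 (not_disjoint_iff_nonempty_inter.1
      (hmeet (ht v₀) (ht v)))))
    have hlt : t v₀ ∩ t v ⊂ (t v₀).erase v := by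
      refine ssubset_of_subset_of_ne (fun y hy => ?_) fun h => hsub (h ▸ inter_subset_right)
      exact mem_erase.2 ⟨fun hyv => hvt v (hyv ▸ (mem_inter.1 hy).2), (mem_inter.1 hy).1⟩
    have := card_lt_card hlt
    rw [card_erase_of_mem hv, (ht v₀).card_eq] at this
    omega
  exact nonempty_of_inter_eq_singleton hmeet (ht v₀) (ht v) hx (ht x) (hvt x)

end Existence

variable (T : G.EaredTriangle)

lemma p_injective : Function.Injective T.p := fun i j h => by
  by_contra hij
  exact (T.adj_p i j hij).ne h

section Corners

variable [DecidableEq V]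

def corners : Finset V := univ.image T.p

def ears : Finset V := univ.image T.e

lemma e_notMem_corners (i : Fin 3) : T.e i ∉ T.corners := by
  rintro hi
  obtain ⟨j, -, hj⟩ := mem_image.1 hi
  rcases eq_or_ne i j with rfl | hij
  · exact T.e_ne_p i hj.symm
  · exact (T.adj_e i j hij).ne hj.symm

lemma card_corners : #T.corners = 3 := by
  simp [corners, card_image_of_injective _ T.p_injective]

lemma isNClique_corners : G.IsNClique 3 T.corners := by
  refine ⟨?_, T.card_corners⟩
  simp only [corners, coe_image, coe_univ, Set.image_univ]
  rintro _ ⟨i, rfl⟩ _ ⟨j, rfl⟩ hij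
  exact T.adj_p i j fun h => hij (h ▸ rfl)

end Corners

lemma not_adj_e_p (h₄ : G.CliqueFree 4) (i : Fin 3) : ¬G.Adj (T.e i) (T.p i) := by
  classical
  intro h
  refine (T.isNClique_corners.insert (a := T.e i) ?_).not_cliqueFree h₄
  simp only [corners, mem_image, mem_univ, true_and, forall_exists_index, forall_apply_eq_imp_iff]
  intro j
  rcases eq_or_ne i j with rfl | hij
  · exact h
  · exact T.adj_e i j hij

lemma e_injective (h₄ : G.CliqueFree 4) : Function.Injective T.e :=
  fun i j h => by
    by_contra hij
    exact T.not_adj_e_p h₄ j (h ▸ T.adj_e i j hij)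

variable [DecidableEq V]

lemma two_le_card_inter_corners (h₄ : G.CliqueFree 4) (hmeet : (G.cliqueSet 3).Intersecting)
    {t : Finset V} (ht : G.IsNClique 3 t) : 2 ≤ #(t ∩ T.corners) := by
  -- if `p k` were the only corner in `t`, then `t` would have to meet `{e k, p i, p j}` in
  -- `e k`, which is not adjacent to `p k`
  obtain ⟨_, hx, hxt⟩ := not_disjoint_iff.1 (hmeet T.isNClique_corners ht)
  obtain ⟨k, -, rfl⟩ := mem_image.1 hx
  have hear : G.IsNClique 3 (insert (T.e k) (T.corners.erase (T.p k))) := by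
    refine T.isNClique_corners.insert_erase (fun w hw => ?_) hx
    obtain ⟨hw, hjk⟩ := mem_sdiff.1 hw
    obtain ⟨j, -, rfl⟩ := mem_image.1 hw
    rw [mem_singleton] at hjk
    exact T.adj_e k j fun h => hjk (h ▸ rfl)
  obtain ⟨y, hy, hyt⟩ := not_disjoint_iff.1 (hmeet hear ht)
  rcases mem_insert.1 hy with rfl | hy
  · exact absurd (ht.1 hyt hxt (T.e_ne_p k)) (T.not_adj_e_p h₄ k)
  · calc 2 = #{y, T.p k} := (card_pair (ne_of_mem_erase hy)).symm
      _ ≤ _ := card_le_card (by simp [insert_subset_iff, hyt, hxt, mem_of_mem_erase hy, hx])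

lemma not_adj_of_notMem_corners (h₄ : G.CliqueFree 4) (hmeet : (G.cliqueSet 3).Intersecting)
    {a b c : V} (ha : a ∉ T.corners) (hb : b ∉ T.corners) (hac : G.Adj a c) (hbc : G.Adj b c) :
    ¬G.Adj a b := by
  intro hab
  have h2 := T.two_le_card_inter_corners h₄ hmeet (is3Clique_triple_iff.2 ⟨hab, hac, hbc⟩)
  have : {a, b, c} ∩ T.corners ⊆ {c} := by
    intro x hx
    obtain ⟨hx, hxT⟩ := mem_inter.1 hx
    rcases mem_insert.1 hx with rfl | hx
    · exact absurd hxT ha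
    rcases mem_insert.1 hx with rfl | hx
    · exact absurd hxT hb
    exact hx
  have := card_le_card this
  rw [card_singleton] at this
  omega

lemma card_le_ten [Fintype V] (T : G.EaredTriangle) (h₄ : G.CliqueFree 4) (hc₄ : Gᶜ.CliqueFree 4)
    (hmeet : (G.cliqueSet 3).Intersecting) : Fintype.card V ≤ 10 := by
  -- a triangle avoiding `p 0` and `p 1` would meet the corners only in `p 2`
  have hp₂ : T.p 2 ∈ T.corners := mem_image_of_mem _ (mem_univ _)
  have h₈ := card_le_eight_of_cliqueFreeOn (s := (T.corners.erase (T.p 2))ᶜ)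
    (fun t ht htc => ?_) hc₄.cliqueFreeOn
  · rw [card_compl, card_erase_of_mem hp₂, T.card_corners] at h₈
    omega
  have : t ∩ T.corners ⊆ {T.p 2} := fun x hx => by
    by_contra hx₂
    exact mem_compl.1 (ht (mem_inter.1 hx).1)
      (mem_erase.2 ⟨by simpa using hx₂, (mem_inter.1 hx).2⟩)
  have := (T.two_le_card_inter_corners h₄ hmeet htc).trans (card_le_card this)
  rw [card_singleton] at this
  omega

lemma card_ears (h₄ : G.CliqueFree 4) : #T.ears = 3 := by
  simp [ears, card_image_of_injective _ (T.e_injective h₄)]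

lemma disjoint_corners_ears : Disjoint T.corners T.ears := by
  refine Finset.disjoint_right.2 fun x hx => ?_
  obtain ⟨i, -, rfl⟩ := mem_image.1 hx
  exact T.e_notMem_corners i

lemma not_adj_e_e (h₄ : G.CliqueFree 4) (hmeet : (G.cliqueSet 3).Intersecting) (i j : Fin 3) :
    ¬G.Adj (T.e i) (T.e j) := by
  obtain ⟨k, hki, hkj⟩ : ∃ k, k ≠ i ∧ k ≠ j := by decide +revert
  exact T.not_adj_of_notMem_corners h₄ hmeet (T.e_notMem_corners i) (T.e_notMem_corners j)
    (T.adj_e i k hki.symm) (T.adj_e j k hkj.symm)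

variable [Fintype V]

def rest : Finset V := (T.corners ∪ T.ears)ᶜ

def earNbhd [DecidableRel G.Adj] (i : Fin 3) : Finset V := T.rest.filter (G.Adj (T.e i))

lemma notMem_corners_of_mem_rest {z : V} (hz : z ∈ T.rest) : z ∉ T.corners :=
  fun h => mem_compl.1 hz (mem_union_left _ h)

lemma notMem_ears_of_mem_rest {z : V} (hz : z ∈ T.rest) : z ∉ T.ears :=
  fun h => mem_compl.1 hz (mem_union_right _ h)

lemma card_rest (h₄ : G.CliqueFree 4) (hV : Fintype.card V = 10) : #T.rest = 4 := by
  rw [rest, card_compl, card_union_of_disjoint T.disjoint_corners_ears, T.card_corners,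
    T.card_ears h₄, hV]

lemma cliqueFreeOn_rest (h₄ : G.CliqueFree 4) (hmeet : (G.cliqueSet 3).Intersecting) :
    G.CliqueFreeOn T.rest 3 := fun t ht htc => by
  have h₂ := T.two_le_card_inter_corners h₄ hmeet htc
  have : t ∩ T.corners = ∅ := eq_empty_of_forall_notMem fun x hx =>
    T.notMem_corners_of_mem_rest (ht (mem_inter.1 hx).1) (mem_inter.1 hx).2
  rw [this] at h₂
  simp at h₂

section EarNbhd

variable [DecidableRel G.Adj]

lemma not_adj_p_of_mem_earNbhd (h₄ : G.CliqueFree 4) (hmeet : (G.cliqueSet 3).Intersecting)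
    {i j : Fin 3} {z : V} (hz : z ∈ T.earNbhd i) (hji : j ≠ i) : ¬G.Adj (T.p j) z := fun h =>
  T.not_adj_of_notMem_corners h₄ hmeet (T.e_notMem_corners i)
    (T.notMem_corners_of_mem_rest (mem_filter.1 hz).1) (T.adj_e i j hji.symm) h.symm
    (mem_filter.1 hz).2

lemma exists_mem_earNbhd (h₄ : G.CliqueFree 4) (hc₄ : Gᶜ.CliqueFree 4)
    (hmeet : (G.cliqueSet 3).Intersecting) {z : V} (hz : z ∈ T.rest) :
    ∃ i, z ∈ T.earNbhd i := by
  by_contra! h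
  refine (IsNClique.insert (G := Gᶜ) (a := z) ⟨?_, T.card_ears h₄⟩ ?_).not_cliqueFree hc₄
  · rintro _ hx _ hy hxy
    obtain ⟨i, -, rfl⟩ := mem_image.1 hx
    obtain ⟨j, -, rfl⟩ := mem_image.1 hy
    exact ⟨hxy, T.not_adj_e_e h₄ hmeet i j⟩
  · intro b hb
    obtain ⟨i, -, rfl⟩ := mem_image.1 hb
    exact ⟨fun h => T.notMem_ears_of_mem_rest hz (h ▸ hb),
      fun h' => h i (mem_filter.2 ⟨hz, h'.symm⟩)⟩

lemma isIndepSet_earNbhd (h₄ : G.CliqueFree 4) (hmeet : (G.cliqueSet 3).Intersecting)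
    (i : Fin 3) : G.IsIndepSet (T.earNbhd i : Set V) := fun _ hx _ hy _ =>
  T.not_adj_of_notMem_corners h₄ hmeet (T.notMem_corners_of_mem_rest (mem_filter.1 hx).1)
    (T.notMem_corners_of_mem_rest (mem_filter.1 hy).1) (mem_filter.1 hx).2.symm
    (mem_filter.1 hy).2.symm

lemma card_earNbhd_le (h₄ : G.CliqueFree 4) (hc₄ : Gᶜ.CliqueFree 4)
    (hmeet : (G.cliqueSet 3).Intersecting) (i : Fin 3) : #(T.earNbhd i) ≤ 2 := by
  have hp : T.p (i + 1) ∉ T.earNbhd i := fun h =>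
    T.notMem_corners_of_mem_rest (mem_filter.1 h).1 (mem_image_of_mem _ (mem_univ _))
  have := IsClique.card_lt_of_cliqueFree (G := Gᶜ) (s := insert (T.p (i + 1)) (T.earNbhd i))
    ?_ hc₄
  · rw [card_insert_of_notMem hp] at this
    omega
  rw [coe_insert, isClique_insert]
  refine ⟨fun x hx y hy hxy => ⟨hxy, T.isIndepSet_earNbhd h₄ hmeet i hx hy hxy⟩,
    fun x hx hne => ⟨hne, T.not_adj_p_of_mem_earNbhd h₄ hmeet hx (by omega)⟩⟩

lemma isClique_rest_sdiff_earNbhd (h₄ : G.CliqueFree 4) (hc₄ : Gᶜ.CliqueFree 4)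
    (hmeet : (G.cliqueSet 3).Intersecting) (i : Fin 3) :
    G.IsClique (↑(T.rest \ T.earNbhd i) : Set V) := by
  intro x hx y hy hxy
  by_contra hnxy
  have hp {z} (hz : z ∈ T.rest \ T.earNbhd i) : Gᶜ.Adj (T.p i) z := by
    obtain ⟨hzZ, hzN⟩ := mem_sdiff.1 hz
    obtain ⟨j, hj⟩ := T.exists_mem_earNbhd h₄ hc₄ hmeet hzZ
    exact ⟨fun h => T.notMem_corners_of_mem_rest hzZ (h ▸ mem_image_of_mem _ (mem_univ _)),
      T.not_adj_p_of_mem_earNbhd h₄ hmeet hj fun h => hzN (h ▸ hj)⟩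
  have he {z} (hz : z ∈ T.rest \ T.earNbhd i) : Gᶜ.Adj (T.e i) z := by
    obtain ⟨hzZ, hzN⟩ := mem_sdiff.1 hz
    exact ⟨fun h => T.notMem_ears_of_mem_rest hzZ (h ▸ mem_image_of_mem _ (mem_univ _)),
      fun h => hzN (mem_filter.2 ⟨hzZ, h⟩)⟩
  refine hc₄ _ ((is3Clique_triple_iff.2 ⟨he hx, he hy, hxy, hnxy⟩).insert (a := T.p i) ?_)
  simp only [mem_insert, mem_singleton, forall_eq_or_imp, forall_eq]
  exact ⟨⟨(T.e_ne_p i).symm, fun h => T.not_adj_e_p h₄ i h.symm⟩, hp hx, hp hy⟩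

end EarNbhd

lemma card_lt_ten (T : G.EaredTriangle) (h₄ : G.CliqueFree 4) (hc₄ : Gᶜ.CliqueFree 4)
    (hmeet : (G.cliqueSet 3).Intersecting) : Fintype.card V < 10 := by
  classical
  by_contra! h
  exact card_ne_four_of_cover (T.cliqueFreeOn_rest h₄ hmeet) T.earNbhd
    (fun i => filter_subset _ _) (T.card_earNbhd_le h₄ hc₄ hmeet) (T.isIndepSet_earNbhd h₄ hmeet)
    (T.isClique_rest_sdiff_earNbhd h₄ hc₄ hmeet) (fun _ => T.exists_mem_earNbhd h₄ hc₄ hmeet)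
    (T.card_rest h₄ (le_antisymm (T.card_le_ten h₄ hc₄ hmeet) h))

end EaredTriangle

end SimpleGraph

/-- Every graph on at least 10 vertices contains a clique on four vertices, or a stable set
on four vertices, or two vertex-disjoint triangles. -/
theorem ten_vertices_K4_or_S4_or_two_triangles {V : Type*} [Fintype V] (G : SimpleGraph V)
    (h : 10 ≤ Fintype.card V) :
    (∃ s : Finset V, G.IsNClique 4 s) ∨
      (∃ s : Finset V, s.card = 4 ∧ G.IsStableSet (s : Set V)) ∨
      (∃ s t : Finset V, G.IsNClique 3 s ∧ G.IsNClique 3 t ∧ Disjoint s t) := by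
  classical
  by_contra! hG
  obtain ⟨h₄, hS, hT⟩ := hG
  have hc₄ : Gᶜ.CliqueFree 4 := fun s hs => hS s hs.card_eq ((isClique_compl G).1 hs.isClique)
  have hmeet : (G.cliqueSet 3).Intersecting := fun s hs t ht => hT s t hs ht
  have : Nonempty V := Fintype.card_pos_iff.1 (by omega)
  obtain ⟨T⟩ := EaredTriangle.nonempty hmeet (exists_isNClique_three_notMem hc₄ h)
  exact (T.card_lt_ten h₄ hc₄ hmeet).not_ge h
end

section
/- Let G be a non-empty graph and E_1, E_2, E_3 pairwise disjoint sets of edges of G such that there are no two vertex-disjoint edges e ∈ E_i, f ∈ E_j with i ≠ j. Then either there exists a vertex v and an index i ∈ {1,2,3} such that v belongs to every edge of E_i, or the graph spanned by E_1 ∪ E_2 ∪ E_3 is a K_4 and E_1, E_2, E_3 are its three perfect matchings. -/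
open SimpleGraph

lemma sym2_cases {V : Type*} (e : Sym2 V) : ∃ a b, e = s(a,b) := by
  induction e using Sym2.ind with | _ a b => exact ⟨a,b,rfl⟩

lemma triangle_absorb {V : Type*} {a b c : V} (hab : a ≠ b) (hbc : b ≠ c) (hac : a ≠ c)
    (g : Sym2 V) (hg : ¬ g.IsDiag)
    (h1 : ∃ v, v ∈ s(a,b) ∧ v ∈ g) (h2 : ∃ v, v ∈ s(b,c) ∧ v ∈ g)
    (h3 : ∃ v, v ∈ s(a,c) ∧ v ∈ g) :
    g = s(a,b) ∨ g = s(b,c) ∨ g = s(a,c) := by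
  obtain ⟨p, q, rfl⟩ := sym2_cases g
  rw [Sym2.mk_isDiag_iff] at hg
  obtain ⟨v1, hv1, hv1g⟩ := h1
  obtain ⟨v2, hv2, hv2g⟩ := h2
  obtain ⟨v3, hv3, hv3g⟩ := h3
  simp only [Sym2.mem_iff] at hv1 hv2 hv3 hv1g hv2g hv3g
  have tri : ∀ z : V, (z = a ∨ z = b) → (z = b ∨ z = c) → (z = a ∨ z = c) → False := by
    rintro z (rfl|rfl) h2' h3'
    · exact h2'.elim hab hac
    · exact h3'.elim (fun h => hab h.symm) (fun h => hbc h)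
  by_cases hp : p = a ∨ p = b ∨ p = c
  · by_cases hq : q = a ∨ q = b ∨ q = c
    · rcases hp with rfl|rfl|rfl <;> rcases hq with rfl|rfl|rfl <;>
        simp_all [Sym2.eq_iff]
    · push_neg at hq
      obtain ⟨hqa, hqb, hqc⟩ := hq
      exfalso
      have step : ∀ x y (v : V), q ≠ x → q ≠ y → (v = x ∨ v = y) → (v = p ∨ v = q) →
          p = x ∨ p = y := by
        intro x y v hx hy hv hvg
        rcases hvg with rfl|rfl
        · exact hv
        · exact (hv.elim hx hy).elim
      exact tri p (step a b v1 hqa hqb hv1 hv1g) (step b c v2 hqb hqc hv2 hv2g)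
        (step a c v3 hqa hqc hv3 hv3g)
  · push_neg at hp
    obtain ⟨hpa, hpb, hpc⟩ := hp
    exfalso
    have step : ∀ x y (v : V), p ≠ x → p ≠ y → (v = x ∨ v = y) → (v = p ∨ v = q) →
        q = x ∨ q = y := by
      intro x y v hx hy hv hvg
      rcases hvg with rfl|rfl
      · exact (hv.elim hx hy).elim
      · exact hv
    exact tri q (step a b v1 hpa hpb hv1 hv1g) (step b c v2 hpb hpc hv2 hv2g)
      (step a c v3 hpa hpc hv3 hv3g)

lemma cross_lemma {V : Type*} {x y z w : V} (hxz : x ≠ z) (hxw : x ≠ w) (hyz : y ≠ z)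
    (hyw : y ≠ w) (g : Sym2 V) (hg : ¬ g.IsDiag)
    (h1 : ∃ v, v ∈ g ∧ v ∈ s(x,y)) (h2 : ∃ v, v ∈ g ∧ v ∈ s(z,w)) :
    g = s(x,z) ∨ g = s(x,w) ∨ g = s(y,z) ∨ g = s(y,w) := by
  obtain ⟨p, q, rfl⟩ := sym2_cases g
  rw [Sym2.mk_isDiag_iff] at hg
  obtain ⟨v1, hv1g, hv1⟩ := h1
  obtain ⟨v2, hv2g, hv2⟩ := h2
  simp only [Sym2.mem_iff] at hv1g hv1 hv2g hv2
  rcases hv1g with rfl|rfl <;> rcases hv2g with rfl|rfl <;>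
    rcases hv1 with rfl|rfl <;> rcases hv2 with rfl|rfl <;>
    simp_all [Sym2.eq_iff]

lemma core {V : Type*} {a b c d : V} (hab : a ≠ b) (hcd : c ≠ d) (hac : a ≠ c)
    (had : a ≠ d) (hbc : b ≠ c) (hbd : b ≠ d)
    {A B C : Set (Sym2 V)}
    (hdA : ∀ e ∈ A, ¬ e.IsDiag) (hdB : ∀ e ∈ B, ¬ e.IsDiag) (hdC : ∀ e ∈ C, ¬ e.IsDiag)
    (hA1 : s(a,b) ∈ A) (hA2 : s(c,d) ∈ A) (hB1 : s(a,c) ∈ B) (hB2 : s(b,d) ∈ B)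
    (mAB : ∀ e ∈ A, ∀ f ∈ B, ∃ v, v ∈ e ∧ v ∈ f)
    (mAC : ∀ e ∈ A, ∀ f ∈ C, ∃ v, v ∈ e ∧ v ∈ f)
    (mBC : ∀ e ∈ B, ∀ f ∈ C, ∃ v, v ∈ e ∧ v ∈ f)
    (dAC : ∀ e, e ∈ A → e ∈ C → False) (dBC : ∀ e, e ∈ B → e ∈ C → False)
    (noC : ∀ v, ∃ e ∈ C, v ∉ e) :
    A = {s(a,b), s(c,d)} ∧ B = {s(a,c), s(b,d)} ∧ C = {s(a,d), s(b,c)} := by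
  have hCcross : ∀ g ∈ C, g = s(a,d) ∨ g = s(b,c) := by
    intro g hg
    have h4 := cross_lemma hac had hbc hbd g (hdC g hg)
      (let ⟨v, hv⟩ := mAC _ hA1 g hg; ⟨v, hv.2, hv.1⟩)
      (let ⟨v, hv⟩ := mAC _ hA2 g hg; ⟨v, hv.2, hv.1⟩)
    rcases h4 with rfl|rfl|rfl|rfl
    · obtain ⟨v, hv1, hv2⟩ := mBC _ hB2 _ hg
      simp only [Sym2.mem_iff] at hv1 hv2
      rcases hv1 with rfl|rfl <;> simp_all
    · left; rfl
    · right; rfl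
    · obtain ⟨v, hv1, hv2⟩ := mBC _ hB1 _ hg
      simp only [Sym2.mem_iff] at hv1 hv2
      rcases hv1 with rfl|rfl <;> simp_all
  have hC1 : s(a,d) ∈ C := by
    obtain ⟨g, hg, hg'⟩ := noC b
    rcases hCcross g hg with rfl|rfl
    · exact hg
    · simp at hg'
  have hC2 : s(b,c) ∈ C := by
    obtain ⟨g, hg, hg'⟩ := noC a
    rcases hCcross g hg with rfl|rfl
    · simp at hg'
    · exact hg
  have hC : C = {s(a,d), s(b,c)} := by
    apply Set.Subset.antisymm
    · intro g hg; rcases hCcross g hg with rfl|rfl <;> simp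
    · rintro g (rfl|rfl) <;> assumption
  have hA : A = {s(a,b), s(c,d)} := by
    apply Set.Subset.antisymm
    · intro g hg
      have h4 := cross_lemma hab had hbc.symm hcd g (hdA g hg)
        (mAB g hg _ hB1) (mAB g hg _ hB2)
      rcases h4 with rfl|rfl|rfl|rfl
      · simp
      · exact (dAC _ hg hC1).elim
      · exact (dAC _ hg (Sym2.eq_swap ▸ hC2)).elim
      · simp
    · rintro g (rfl|rfl) <;> assumption
  have hB : B = {s(a,c), s(b,d)} := by
    apply Set.Subset.antisymm
    · intro g hg
      have h4 := cross_lemma hac had hbc hbd g (hdB g hg)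
        (let ⟨v, hv⟩ := mAB _ hA1 g hg; ⟨v, hv.2, hv.1⟩)
        (let ⟨v, hv⟩ := mAB _ hA2 g hg; ⟨v, hv.2, hv.1⟩)
      rcases h4 with rfl|rfl|rfl|rfl
      · simp
      · exact (dBC _ hg hC1).elim
      · exact (dBC _ hg hC2).elim
      · simp
    · rintro g (rfl|rfl) <;> assumption
  exact ⟨hA, hB, hC⟩

lemma uniq_helper {V : Type*} {e1 e2 : Sym2 V} {S : Set (Sym2 V)} (hS : S = {e1, e2})
    {v : V} (h1 : v ∈ e1) (h2 : v ∉ e2) : ∃! e, e ∈ S ∧ v ∈ e := by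
  refine ⟨e1, ⟨by simp [hS], h1⟩, ?_⟩
  rintro e ⟨he, hv⟩
  rw [hS] at he
  rcases he with rfl|rfl
  · rfl
  · exact absurd hv h2

lemma assemble {V : Type*} {a b c d : V} (hab : a ≠ b) (hcd : c ≠ d) (hac : a ≠ c)
    (had : a ≠ d) (hbc : b ≠ c) (hbd : b ≠ d)
    (E : Fin 3 → Set (Sym2 V))
    (hE0 : E 0 = {s(a,b), s(c,d)}) (hE1 : E 1 = {s(a,c), s(b,d)})
    (hE2 : E 2 = {s(a,d), s(b,c)}) :
    (∃ s : Finset V, s.card = 4 ∧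
        (E 0 ∪ E 1 ∪ E 2 = {e : Sym2 V | ¬ e.IsDiag ∧ ∀ v ∈ e, v ∈ s}) ∧
        ∀ i : Fin 3, (∀ e ∈ E i, ∀ v ∈ e, v ∈ s) ∧ ∀ v ∈ s, ∃! e, e ∈ E i ∧ v ∈ e) := by
  classical
  have nomem : ∀ (v x y : V), v ≠ x → v ≠ y → v ∉ s(x,y) := by
    intro v x y h1 h2 hm
    rw [Sym2.mem_iff] at hm
    rcases hm with rfl|rfl <;> simp_all
  refine ⟨{a, b, c, d}, ?_, ?_, ?_⟩
  · rw [Finset.card_insert_of_notMem (by simp [hab, hac, had]),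
      Finset.card_insert_of_notMem (by simp [hbc, hbd]),
      Finset.card_insert_of_notMem (by simp [hcd]), Finset.card_singleton]
  · ext e
    simp only [Set.mem_union, hE0, hE1, hE2, Set.mem_insert_iff, Set.mem_singleton_iff,
      Set.mem_setOf_eq]
    constructor
    · rintro (((rfl|rfl)|(rfl|rfl))|(rfl|rfl)) <;>
        refine ⟨by simp [Sym2.mk_isDiag_iff, hab, hcd, hac, had, hbc, hbd], ?_⟩ <;>
        · intro v hv
          rw [Sym2.mem_iff] at hv
          rcases hv with rfl|rfl <;> simp
    · rintro ⟨hd, hmem⟩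
      obtain ⟨x, y, rfl⟩ := sym2_cases e
      rw [Sym2.mk_isDiag_iff] at hd
      have hx := hmem x (by simp)
      have hy := hmem y (by simp)
      simp only [Finset.mem_insert, Finset.mem_singleton] at hx hy
      rcases hx with rfl|rfl|rfl|rfl <;> rcases hy with rfl|rfl|rfl|rfl <;>
        simp_all [Sym2.eq_iff]
  · have cover : ∀ (x y z w : V), ∀ e ∈ ({s(x,y), s(z,w)} : Set (Sym2 V)),
        ∀ v ∈ e, v = x ∨ v = y ∨ v = z ∨ v = w := by
      rintro x y z w e (rfl|rfl) v hv <;> rw [Sym2.mem_iff] at hv <;>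
        rcases hv with rfl|rfl <;> tauto
    have P0 : (∀ e ∈ E 0, ∀ v ∈ e, v ∈ ({a,b,c,d} : Finset V)) ∧
        ∀ v ∈ ({a,b,c,d} : Finset V), ∃! e, e ∈ E 0 ∧ v ∈ e := by
      have hE0' : E 0 = {s(c,d), s(a,b)} := by rw [hE0, Set.pair_comm]
      refine ⟨fun e he v hv => ?_, fun v hv => ?_⟩
      · have := cover a b c d e (hE0 ▸ he) v hv
        simp only [Finset.mem_insert, Finset.mem_singleton]; tauto
      · simp only [Finset.mem_insert, Finset.mem_singleton] at hv
        rcases hv with rfl|rfl|rfl|rfl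
        · exact uniq_helper hE0 (by simp) (nomem _ _ _ hac had)
        · exact uniq_helper hE0 (by simp) (nomem _ _ _ hbc hbd)
        · exact uniq_helper hE0' (by simp) (nomem _ _ _ hac.symm hbc.symm)
        · exact uniq_helper hE0' (by simp) (nomem _ _ _ had.symm hbd.symm)
    have P1 : (∀ e ∈ E 1, ∀ v ∈ e, v ∈ ({a,b,c,d} : Finset V)) ∧
        ∀ v ∈ ({a,b,c,d} : Finset V), ∃! e, e ∈ E 1 ∧ v ∈ e := by
      have hE1' : E 1 = {s(b,d), s(a,c)} := by rw [hE1, Set.pair_comm]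
      refine ⟨fun e he v hv => ?_, fun v hv => ?_⟩
      · have := cover a c b d e (hE1 ▸ he) v hv
        simp only [Finset.mem_insert, Finset.mem_singleton]; tauto
      · simp only [Finset.mem_insert, Finset.mem_singleton] at hv
        rcases hv with rfl|rfl|rfl|rfl
        · exact uniq_helper hE1 (by simp) (nomem _ _ _ hab had)
        · exact uniq_helper hE1' (by simp) (nomem _ _ _ hab.symm hbc)
        · exact uniq_helper hE1 (by simp) (nomem _ _ _ hbc.symm hcd)
        · exact uniq_helper hE1' (by simp) (nomem _ _ _ had.symm hcd.symm)
    have P2 : (∀ e ∈ E 2, ∀ v ∈ e, v ∈ ({a,b,c,d} : Finset V)) ∧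
        ∀ v ∈ ({a,b,c,d} : Finset V), ∃! e, e ∈ E 2 ∧ v ∈ e := by
      have hE2' : E 2 = {s(b,c), s(a,d)} := by rw [hE2, Set.pair_comm]
      refine ⟨fun e he v hv => ?_, fun v hv => ?_⟩
      · have := cover a d b c e (hE2 ▸ he) v hv
        simp only [Finset.mem_insert, Finset.mem_singleton]; tauto
      · simp only [Finset.mem_insert, Finset.mem_singleton] at hv
        rcases hv with rfl|rfl|rfl|rfl
        · exact uniq_helper hE2 (by simp) (nomem _ _ _ hab hac)
        · exact uniq_helper hE2' (by simp) (nomem _ _ _ hab.symm hbd)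
        · exact uniq_helper hE2' (by simp) (nomem _ _ _ hac.symm hcd)
        · exact uniq_helper hE2 (by simp) (nomem _ _ _ hbd.symm hcd.symm)
    intro i
    fin_cases i
    · exact P0
    · exact P1
    · exact P2

/-- Let `G` be a non-empty graph and `E 0, E 1, E 2` pairwise disjoint sets of edges of `G`
such that no two vertex-disjoint edges lie in distinct `E i`'s. Then either some vertex `v`
belongs to every edge of some `E i`, or the graph spanned by the `E i`'s is a `K₄` and the
`E i`'s are its three perfect matchings. -/
theorem three_edge_sets_lemma {V : Type*} [Fintype V] [Nonempty V] (G : SimpleGraph V)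
    (E : Fin 3 → Set (Sym2 V))
    (hsub : ∀ i, E i ⊆ G.edgeSet)
    (hdisj : Pairwise (fun i j => Disjoint (E i) (E j)))
    (hmeet : ∀ i j, i ≠ j → ∀ e ∈ E i, ∀ f ∈ E j, ∃ v : V, v ∈ e ∧ v ∈ f) :
    (∃ (v : V) (i : Fin 3), ∀ e ∈ E i, v ∈ e) ∨
      (∃ s : Finset V, s.card = 4 ∧
        (E 0 ∪ E 1 ∪ E 2 = {e : Sym2 V | ¬ e.IsDiag ∧ ∀ v ∈ e, v ∈ s}) ∧
        ∀ i : Fin 3, (∀ e ∈ E i, ∀ v ∈ e, v ∈ s) ∧ ∀ v ∈ s, ∃! e, e ∈ E i ∧ v ∈ e) := by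
  classical
  by_cases hLem : ∃ (v : V) (i : Fin 3), ∀ e ∈ E i, v ∈ e
  · exact Or.inl hLem
  push_neg at hLem
  have hL : ∀ (v : V) (i : Fin 3), ∃ e ∈ E i, v ∉ e := hLem
  have hdiag : ∀ i, ∀ e ∈ E i, ¬ e.IsDiag := fun i e he =>
    G.not_isDiag_of_mem_edgeSet (hsub i he)
  obtain ⟨v0⟩ := (inferInstance : Nonempty V)
  right
  by_cases hpair : ∃ e ∈ E 0, ∃ f ∈ E 0, ∀ v : V, ¬(v ∈ e ∧ v ∈ f)
  · obtain ⟨e, he, f, hf, hef⟩ := hpair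
    obtain ⟨a, b, rfl⟩ := sym2_cases e
    obtain ⟨c, d, rfl⟩ := sym2_cases f
    have hab : a ≠ b := by
      have := hdiag 0 _ he; rwa [Sym2.mk_isDiag_iff] at this
    have hcd : c ≠ d := by
      have := hdiag 0 _ hf; rwa [Sym2.mk_isDiag_iff] at this
    have hac : a ≠ c := by rintro rfl; exact hef a ⟨by simp, by simp⟩
    have had : a ≠ d := by rintro rfl; exact hef a ⟨by simp, by simp⟩
    have hbc : b ≠ c := by rintro rfl; exact hef b ⟨by simp, by simp⟩
    have hbd : b ≠ d := by rintro rfl; exact hef b ⟨by simp, by simp⟩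
    have mcross : ∀ g ∈ E 1, g = s(a,c) ∨ g = s(a,d) ∨ g = s(b,c) ∨ g = s(b,d) :=
      fun g hg => cross_lemma hac had hbc hbd g (hdiag 1 g hg)
        (hmeet 1 0 (by decide) g hg _ he) (hmeet 1 0 (by decide) g hg _ hf)
    have key : (s(a,c) ∈ E 1 ∧ s(b,d) ∈ E 1) ∨ (s(a,d) ∈ E 1 ∧ s(b,c) ∈ E 1) := by
      obtain ⟨ga, hga, hga'⟩ := hL a 1
      obtain ⟨gb, hgb, hgb'⟩ := hL b 1
      rcases mcross ga hga with rfl|rfl|rfl|rfl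
      · exact absurd (by simp) hga'
      · exact absurd (by simp) hga'
      · rcases mcross gb hgb with rfl|rfl|rfl|rfl
        · obtain ⟨gc, hgc, hgc'⟩ := hL c 1
          rcases mcross gc hgc with rfl|rfl|rfl|rfl
          · exact absurd (by simp) hgc'
          · exact Or.inr ⟨hgc, hga⟩
          · exact absurd (by simp) hgc'
          · exact Or.inl ⟨hgb, hgc⟩
        · exact Or.inr ⟨hgb, hga⟩
        · exact absurd (by simp) hgb'
        · exact absurd (by simp) hgb'
      · rcases mcross gb hgb with rfl|rfl|rfl|rfl
        · exact Or.inl ⟨hgb, hga⟩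
        · obtain ⟨gd, hgd, hgd'⟩ := hL d 1
          rcases mcross gd hgd with rfl|rfl|rfl|rfl
          · exact Or.inl ⟨hgd, hga⟩
          · exact absurd (by simp) hgd'
          · exact Or.inr ⟨hgb, hgd⟩
          · exact absurd (by simp) hgd'
        · exact absurd (by simp) hgb'
        · exact absurd (by simp) hgb'
    have d02 : ∀ g, g ∈ E 0 → g ∈ E 2 → False := fun g h0 h2 =>
      Set.disjoint_left.mp (hdisj (show (0:Fin 3) ≠ 2 by decide)) h0 h2
    have d12 : ∀ g, g ∈ E 1 → g ∈ E 2 → False := fun g h1 h2 =>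
      Set.disjoint_left.mp (hdisj (show (1:Fin 3) ≠ 2 by decide)) h1 h2
    rcases key with ⟨hB1, hB2⟩ | ⟨hB1, hB2⟩
    · obtain ⟨h0, h1, h2⟩ := core hab hcd hac had hbc hbd (hdiag 0) (hdiag 1) (hdiag 2)
        he hf hB1 hB2 (hmeet 0 1 (by decide)) (hmeet 0 2 (by decide))
        (hmeet 1 2 (by decide)) d02 d12 (fun v => hL v 2)
      exact assemble hab hcd hac had hbc hbd E h0 h1 h2
    · obtain ⟨h0, h1, h2⟩ := core hab hcd.symm had hac hbd hbc (hdiag 0) (hdiag 1) (hdiag 2)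
        he (by rw [Sym2.eq_swap]; exact hf) hB1 hB2 (hmeet 0 1 (by decide))
        (hmeet 0 2 (by decide)) (hmeet 1 2 (by decide)) d02 d12 (fun v => hL v 2)
      exact assemble hab hcd.symm had hac hbd hbc E h0 h1 h2
  · exfalso
    push_neg at hpair
    obtain ⟨e1, he1, -⟩ := hL v0 0
    obtain ⟨a, b, rfl⟩ := sym2_cases e1
    have hab : a ≠ b := by
      have := hdiag 0 _ he1; rwa [Sym2.mk_isDiag_iff] at this
    obtain ⟨e2, he2, ha2⟩ := hL a 0
    obtain ⟨w, hw1, hw2⟩ := hpair _ he1 _ he2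
    have hb2 : b ∈ e2 := by
      rw [Sym2.mem_iff] at hw1
      rcases hw1 with rfl|rfl
      · exact absurd hw2 ha2
      · exact hw2
    obtain ⟨c, rfl⟩ := Sym2.mem_iff_exists.mp hb2
    have hbc : b ≠ c := by
      have := hdiag 0 _ he2; rwa [Sym2.mk_isDiag_iff] at this
    have hac : a ≠ c := fun h => ha2 (by rw [Sym2.mem_iff]; right; exact h)
    obtain ⟨e3, he3, hb3⟩ := hL b 0
    obtain ⟨u, hu1, hu3⟩ := hpair _ he1 _ he3
    have ha3 : a ∈ e3 := by
      rw [Sym2.mem_iff] at hu1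
      rcases hu1 with rfl|rfl
      · exact hu3
      · exact absurd hu3 hb3
    obtain ⟨d, rfl⟩ := Sym2.mem_iff_exists.mp ha3
    obtain ⟨t, ht2, ht3⟩ := hpair _ he2 _ he3
    have htc : t = c := by
      rw [Sym2.mem_iff] at ht2
      rcases ht2 with rfl|rfl
      · exact absurd ht3 hb3
      · rfl
    rw [htc] at ht3
    have hcd : c = d := by
      rw [Sym2.mem_iff] at ht3
      rcases ht3 with h|h
      · exact absurd h.symm hac
      · exact h
    have he3' : s(a,c) ∈ E 0 := by rw [hcd]; exact he3
    obtain ⟨g, hg, -⟩ := hL v0 1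
    have hone : (0 : Fin 3) ≠ 1 := by decide
    have habs := triangle_absorb hab hbc hac g (hdiag 1 g hg)
      (hmeet 0 1 hone _ he1 _ hg) (hmeet 0 1 hone _ he2 _ hg)
      (hmeet 0 1 hone _ he3' _ hg)
    have hd01 := Set.disjoint_left.mp (hdisj hone)
    rcases habs with rfl|rfl|rfl
    · exact hd01 he1 hg
    · exact hd01 he2 hg
    · exact hd01 he3' hg
end

section
/- Every chordal graph is either a complete graph or has a clique cutset. -/
/-!
If `G` is not complete, pick non-adjacent `a ≠ b` and an inclusion-minimal vertex set `S`
separating them; finiteness makes it exist. Dirac's argument shows that `S` is a clique. By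
minimality every `x ∈ S` has a neighbour in the component `A` of `a` in `G - S` and one in the
component `B` of `b`. For non-adjacent `x, y ∈ S`, a shortest `x`–`y` path through `A` and one
through `B` are chordless, and since no edge joins `A` to `B` they close up to a chordless cycle
of length at least `4`.
-/

open SimpleGraph

/-- A graph is chordal if it contains no induced cycle of length at least 4. -/
def SimpleGraph.IsChordal {V : Type*} (G : SimpleGraph V) : Prop :=
  ∀ n : ℕ, 4 ≤ n → IsEmpty (cycleGraph n ↪g G)

namespace SimpleGraph

namespace Walk

variable {V : Type*} {G : SimpleGraph V} {u v w : V}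

theorem two_le_length_of_not_adj {p : G.Walk u v} (hne : u ≠ v) (hnadj : ¬ G.Adj u v) :
    2 ≤ p.length := by
  by_contra h
  obtain h0 | h1 : p.length = 0 ∨ p.length = 1 := by omega
  exacts [hne (p.eq_of_length_eq_zero h0), hnadj (p.adj_of_length_eq_one h1)]

theorem IsChordless.append {p : G.Walk u v} {q : G.Walk v w} (hp : p.IsChordless)
    (hq : q.IsChordless)
    (hpq : ∀ a ∈ p.support, ∀ b ∈ q.support, G.Adj a b → a ∈ q.support ∨ b ∈ p.support) :
    (p.append q).IsChordless := by
  rw [isChordless_iff_forall_mem_edges]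
  intro a b ha hb hab
  rw [mem_support_append_iff] at ha hb
  rw [edges_append, List.mem_append]
  suffices (a ∈ p.support ∧ b ∈ p.support) ∨ (a ∈ q.support ∧ b ∈ q.support) by
    rcases this with ⟨ha, hb⟩ | ⟨ha, hb⟩
    · exact .inl (hp.mem_edges ha hb hab)
    · exact .inr (hq.mem_edges ha hb hab)
  have hab' := fun ha hb => hpq a ha b hb hab
  have hba' := fun hb ha => hpq b hb a ha hab.symm
  tauto

theorem isChordless_of_forall_length_le {p : G.Walk u v}
    (hmin : ∀ q : G.Walk u v, (∀ z ∈ q.support, z ∈ p.support) → p.length ≤ q.length) :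
    p.IsChordless := by
  have key (i j : ℕ) (hij : i < j) (hj : j ≤ p.length) (hadj : G.Adj (p.getVert i) (p.getVert j)) :
      s(p.getVert i, p.getVert j) ∈ p.edges := by
    obtain rfl | hji := (Nat.succ_le_of_lt hij).eq_or_lt
    · exact p.mk_mem_edges_iff_exists.mpr ⟨i, by omega, rfl⟩
    · have hshort := hmin ((p.take i).append (cons hadj (p.drop j))) (by
        intro z hz
        simp only [mem_support_append_iff, support_cons, List.mem_cons, support_take,
          drop_support_eq_support_drop_min] at hz
        rcases hz with hz | rfl | hz
        · exact List.take_subset _ _ hz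
        · exact p.getVert_mem_support i
        · exact List.drop_subset _ _ hz)
      simp only [length_append, take_length, length_cons, drop_length] at hshort
      omega
  rw [isChordless_iff_forall_mem_edges]
  intro a b ha hb hab
  obtain ⟨i, rfl, hi⟩ := mem_support_iff_exists_getVert.mp ha
  obtain ⟨j, rfl, hj⟩ := mem_support_iff_exists_getVert.mp hb
  rcases Nat.lt_trichotomy i j with h | rfl | h
  · exact key i j h hj hab
  · exact absurd hab (G.irrefl)
  · rw [Sym2.eq_swap]; exact key j i h hi hab.symm

theorem IsCycle.nonempty_embedding_cycleGraph {c : G.Walk u u} (hc : c.IsCycle)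
    (hcl : c.IsChordless) : Nonempty (cycleGraph c.length ↪g G) := by
  obtain ⟨m, hm⟩ : ∃ m, c.length = m + 2 := ⟨c.length - 2, by have := hc.three_le_length; omega⟩
  rw [hm]
  let f : Fin (m + 2) → V := fun i => c.getVert i
  have hf : Function.Injective f := fun i j h =>
    Fin.ext (hc.getVert_injOn' (by simp only [Set.mem_ofPred_eq]; omega)
      (by simp only [Set.mem_ofPred_eq]; omega) h)
  -- `i + 1` wraps around in `Fin (m + 2)` exactly where the closed walk `c` returns to `u`
  have hsucc (i : Fin (m + 2)) : f (i + 1) = c.getVert (i + 1) := by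
    simp only [f, Fin.val_add_one]
    split_ifs with h
    · rw [h, Fin.val_last, c.getVert_zero, ← hm, c.getVert_length]
    · rfl
  have hadj (i : Fin (m + 2)) : G.Adj (f i) (f (i + 1)) := by
    rw [hsucc]; exact c.adj_getVert_succ (by omega)
  refine ⟨⟨⟨f, hf⟩, fun {i j} => ?_⟩⟩
  simp only [Function.Embedding.coeFn_mk, cycleGraph_adj, sub_eq_iff_eq_add, add_comm (1 : Fin _)]
  constructor
  · intro h
    obtain ⟨k, hk, hkij⟩ := c.mk_mem_edges_iff_exists.mp
      (hcl.mem_edges (c.getVert_mem_support _) (c.getVert_mem_support _) h)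
    let K : Fin (m + 2) := ⟨k, by omega⟩
    rw [← hsucc K] at hkij
    rcases Sym2.eq_iff.mp hkij with ⟨hi, hj⟩ | ⟨hj, hi⟩
    · right; rw [← hf (show f K = f i from hi), ← hf (show f (K + 1) = f j from hj)]
    · left; rw [← hf (show f K = f j from hj), ← hf (show f (K + 1) = f i from hi)]
  · rintro (rfl | rfl)
    · exact (hadj j).symm
    · exact hadj i

end Walk

variable {V : Type*} {G : SimpleGraph V} {T T' : Set V} {u v w : V}

def ReachableWithin (G : SimpleGraph V) (T : Set V) (u v : V) : Prop :=
  ∃ p : G.Walk u v, ∀ z ∈ p.support, z ∈ T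

namespace ReachableWithin

theorem refl (hu : u ∈ T) : G.ReachableWithin T u u :=
  ⟨.nil, by simpa using hu⟩

theorem symm (h : G.ReachableWithin T u v) : G.ReachableWithin T v u := by
  obtain ⟨p, hp⟩ := h
  exact ⟨p.reverse, by simpa using hp⟩

theorem trans (huv : G.ReachableWithin T u v) (hvw : G.ReachableWithin T v w) :
    G.ReachableWithin T u w := by
  obtain ⟨p, hp⟩ := huv
  obtain ⟨q, hq⟩ := hvw
  refine ⟨p.append q, fun z hz => ?_⟩
  rcases (Walk.mem_support_append_iff p q).mp hz with hz | hz
  exacts [hp z hz, hq z hz]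

theorem mono (h : G.ReachableWithin T u v) (hT : T ⊆ T') : G.ReachableWithin T' u v := by
  obtain ⟨p, hp⟩ := h
  exact ⟨p, fun z hz => hT (hp z hz)⟩

theorem mem_right (h : G.ReachableWithin T u v) : v ∈ T := by
  obtain ⟨p, hp⟩ := h
  exact hp v p.end_mem_support

theorem within_setOf {a : V} (hau : G.ReachableWithin T a u) (huv : G.ReachableWithin T u v) :
    G.ReachableWithin {z | G.ReachableWithin T a z} u v := by
  classical
  obtain ⟨p, hp⟩ := huv
  exact ⟨p, fun z hz => hau.trans ⟨p.takeUntil z hz,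
    fun t ht => hp t (p.support_takeUntil_subset_support hz ht)⟩⟩

theorem exists_isPath_isChordless (h : G.ReachableWithin T u v) :
    ∃ p : G.Walk u v, p.IsPath ∧ p.IsChordless ∧ ∀ z ∈ p.support, z ∈ T := by
  classical
  have hex : ∃ n, ∃ p : G.Walk u v, (∀ z ∈ p.support, z ∈ T) ∧ p.length = n := by
    obtain ⟨p, hp⟩ := h
    exact ⟨_, p, hp, rfl⟩
  obtain ⟨p, hpT, hplen⟩ := Nat.find_spec hex
  have hshortest (q : G.Walk u v) (hqT : ∀ z ∈ q.support, z ∈ T) : p.bypass.length ≤ q.length :=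
    p.length_bypass_le_length.trans (hplen ▸ Nat.find_min' hex ⟨q, hqT, rfl⟩)
  have hbT : ∀ z ∈ p.bypass.support, z ∈ T := fun z hz => hpT z (p.support_bypass_subset_support hz)
  exact ⟨p.bypass, p.bypass_isPath, Walk.isChordless_of_forall_length_le
    fun q hq => hshortest q fun z hz => hbT z (hq z hz), hbT⟩

end ReachableWithin

theorem Adj.reachableWithin (h : G.Adj u v) (hu : u ∈ T) (hv : v ∈ T) :
    G.ReachableWithin T u v :=
  ⟨h.toWalk, by simp [hu, hv]⟩

theorem reachableWithin_of_reachable_induce {u v : T} (h : (G.induce T).Reachable u v) :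
    G.ReachableWithin T u v := by
  obtain ⟨p⟩ := h
  refine ⟨p.map (Embedding.induce T).toHom, fun z hz => ?_⟩
  obtain ⟨t, -, rfl⟩ := List.mem_map.mp ((p.support_map _) ▸ hz)
  exact t.2

def Separates (G : SimpleGraph V) (S : Set V) (a b : V) : Prop :=
  a ∉ S ∧ b ∉ S ∧ ¬ G.ReachableWithin Sᶜ a b

variable {S : Set V} {a b x y : V}

theorem separates_compl_pair (hab : a ≠ b) (hnadj : ¬ G.Adj a b) : G.Separates {a, b}ᶜ a b := by
  refine ⟨by simp, by simp, fun ⟨p, hp⟩ => hnadj ?_⟩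
  obtain ⟨d, hd, hda, hdb⟩ := p.exists_boundary_dart {a} rfl (Ne.symm hab)
  have hdb' := hp _ (p.dart_snd_mem_support_of_mem_darts hd)
  simp only [Set.mem_singleton_iff, compl_compl, Set.mem_insert_iff] at hda hdb hdb'
  exact hda ▸ hdb'.resolve_left hdb ▸ d.adj

theorem separates_comm : G.Separates S a b ↔ G.Separates S b a :=
  ⟨fun ⟨ha, hb, h⟩ => ⟨hb, ha, fun h' => h h'.symm⟩,
    fun ⟨hb, ha, h⟩ => ⟨ha, hb, fun h' => h h'.symm⟩⟩

theorem minimal_separates_comm :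
    Minimal (G.Separates · a b) S ↔ Minimal (G.Separates · b a) S := by
  rw [show (G.Separates · a b) = (G.Separates · b a) from funext fun _ => propext separates_comm]

theorem exists_reachableWithin_adj_of_minimal_separates
    (hS : Minimal (G.Separates · a b) S) (hx : x ∈ S) :
    ∃ z, G.ReachableWithin Sᶜ a z ∧ G.Adj z x := by
  obtain ⟨ha, hb, hab⟩ := hS.prop
  obtain ⟨p, hp⟩ : G.ReachableWithin (S \ {x})ᶜ a b := by
    by_contra h
    exact hS.not_prop_of_lt (Set.sdiff_singleton_ssubset.mpr hx)
      ⟨fun h' => ha h'.1, fun h' => hb h'.1, h⟩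
  obtain ⟨d, hd, hda, hdb⟩ :=
    p.exists_boundary_dart {z | G.ReachableWithin Sᶜ a z} (.refl ha) hab
  have hdx : d.snd = x := by
    by_contra hne
    have hdS : d.snd ∉ S := fun h => hp _ (p.dart_snd_mem_support_of_mem_darts hd) ⟨h, hne⟩
    exact hdb (hda.trans (d.adj.reachableWithin hda.mem_right hdS))
  exact ⟨d.fst, hda, hdx ▸ d.adj⟩

theorem reachableWithin_of_minimal_separates (hS : Minimal (G.Separates · a b) S)
    (hx : x ∈ S) (hy : y ∈ S) :
    G.ReachableWithin ({v | G.ReachableWithin Sᶜ a v} ∪ {x, y}) x y := by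
  obtain ⟨zx, hazx, hzx⟩ := exists_reachableWithin_adj_of_minimal_separates hS hx
  obtain ⟨zy, hazy, hzy⟩ := exists_reachableWithin_adj_of_minimal_separates hS hy
  have hmid := hazx.within_setOf (hazx.symm.trans hazy)
  exact (hzx.symm.reachableWithin (.inr (.inl rfl)) (.inl hazx)).trans
    ((hmid.mono Set.subset_union_left).trans (hzy.reachableWithin (.inl hazy) (.inr (.inr rfl))))

theorem IsChordal.adj_of_reachableWithin (hch : G.IsChordal) {A B : Set V} (hxy : x ≠ y)
    (hAB : ∀ u ∈ A, ∀ v ∈ B, u ≠ v ∧ ¬ G.Adj u v)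
    (hA : G.ReachableWithin (A ∪ {x, y}) x y) (hB : G.ReachableWithin (B ∪ {x, y}) x y) :
    G.Adj x y := by
  by_contra hnadj
  obtain ⟨p, hp, hpc, hpA⟩ := hA.exists_isPath_isChordless
  obtain ⟨q, hq, hqc, hqB⟩ := hB.symm.exists_isPath_isChordless
  have hpA' (z : V) (hz : z ∈ p.support) (hzx : z ≠ x) (hzy : z ≠ y) : z ∈ A := by
    simpa [hzx, hzy] using hpA z hz
  have hqB' (z : V) (hz : z ∈ q.support) (hzx : z ≠ x) (hzy : z ≠ y) : z ∈ B := by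
    simpa [hzx, hzy] using hqB z hz
  have hp2 : 2 ≤ p.length := Walk.two_le_length_of_not_adj hxy hnadj
  have hq2 : 2 ≤ q.length := Walk.two_le_length_of_not_adj hxy.symm fun h => hnadj h.symm
  have hdisj : p.support.tail.Disjoint q.support.tail := by
    intro z hzp hzq
    have hpx := hp.support_nodup
    have hqy := hq.support_nodup
    rw [← p.cons_tail_support, List.nodup_cons] at hpx
    rw [← q.cons_tail_support, List.nodup_cons] at hqy
    have hzx : z ≠ x := fun h => hpx.1 (h ▸ hzp)
    have hzy : z ≠ y := fun h => hqy.1 (h ▸ hzq)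
    exact (hAB z (hpA' z (List.mem_of_mem_tail hzp) hzx hzy)
      z (hqB' z (List.mem_of_mem_tail hzq) hzx hzy)).1 rfl
  have hcross : ∀ a ∈ p.support, ∀ b ∈ q.support, G.Adj a b → a ∈ q.support ∨ b ∈ p.support := by
    intro a ha b hb hab
    by_cases hax : a = x ∨ a = y
    · rcases hax with rfl | rfl
      exacts [.inl q.end_mem_support, .inl q.start_mem_support]
    by_cases hbx : b = x ∨ b = y
    · rcases hbx with rfl | rfl
      exacts [.inr p.start_mem_support, .inr p.end_mem_support]
    push Not at hax hbx
    exact absurd hab (hAB a (hpA' a ha hax.1 hax.2) b (hqB' b hb hbx.1 hbx.2)).2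
  obtain ⟨e⟩ := (hp.isCycle_append hq hdisj (.inl hp2)).nonempty_embedding_cycleGraph
    (hpc.append hqc hcross)
  exact (hch _ (by rw [Walk.length_append]; omega)).false e

theorem IsChordal.isClique_of_minimal_separates (hch : G.IsChordal)
    (hS : Minimal (G.Separates · a b) S) : G.IsClique S := by
  intro x hx y hy hxy
  refine hch.adj_of_reachableWithin hxy (fun u hu v hv => ?_)
    (reachableWithin_of_minimal_separates hS hx hy)
    (reachableWithin_of_minimal_separates (minimal_separates_comm.mp hS) hx hy)
  obtain ⟨-, -, hab⟩ := hS.prop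
  refine ⟨fun huv => hab (hu.trans (huv ▸ hv).symm), fun huv => hab ?_⟩
  exact hu.trans ((huv.reachableWithin hu.mem_right hv.mem_right).trans hv.symm)

end SimpleGraph

/-- Every chordal graph is either a complete graph or has a clique cutset. -/
theorem chordal_complete_or_clique_cutset {V : Type*} [Fintype V] (G : SimpleGraph V)
    (hch : G.IsChordal) :
    (∀ u v : V, u ≠ v → G.Adj u v) ∨
      ∃ s : Set V, G.IsClique s ∧ ¬ (G.induce sᶜ).Preconnected := by
  rw [or_iff_not_imp_left]
  intro hcomplete
  push Not at hcomplete
  obtain ⟨a, b, hab, hnadj⟩ := hcomplete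
  obtain ⟨S, -, hS⟩ := exists_minimal_le_of_wellFoundedLT (G.Separates · a b) _
    (separates_compl_pair hab hnadj)
  refine ⟨S, hch.isClique_of_minimal_separates hS, fun hconn => hS.prop.2.2 ?_⟩
  exact reachableWithin_of_reachable_induce (hconn ⟨a, hS.prop.1⟩ ⟨b, hS.prop.2.1⟩)
end

section
/- Let G be a chordless graph. Then G is sparse, or G admits a 1-cutset, or G admits a proper 2-cutset. -/
/-!
Let `u v` be adjacent vertices of degree at least three in a chordless graph `G` without
1-cutset, and let `H = G - uv`. A cycle of `H` through `u` and `v` would have `uv` as a chord,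
so by the two-vertex case of Menger's theorem some `w` separates `u` from `v` in `H`. For a
third neighbour `x` of `u` (other than `w`), the path `u x ⋯ v` obtained from an `x`–`v` path
avoiding `u` lies in `H`, hence passes through `w`; closed by `vu` it is a cycle on which `uw`
would be a chord, so `u` and `w` are not adjacent. Then `{u, w}` is a proper 2-cutset: the side
containing the other neighbours of `u` is not a path from `u` since `u` has two neighbours
there, and the side containing `v` is not one since `v` has three neighbours in it together
with `{u, w}`.
-/

open SimpleGraph

/-- A graph is chordless if every cycle is induced: any edge between two vertices of a
cycle is an edge of the cycle. -/
def SimpleGraph.IsChordless {V : Type*} (G : SimpleGraph V) : Prop :=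
  ∀ (v : V) (c : G.Walk v v), c.IsCycle →
    ∀ u w : V, u ∈ c.support → w ∈ c.support → G.Adj u w → s(u, w) ∈ c.edges

/-- A graph is sparse if no two adjacent vertices both have degree at least 3. -/
def SimpleGraph.IsSparse {V : Type*} (G : SimpleGraph V) : Prop :=
  ∀ u v : V, G.Adj u v → ¬ (3 ≤ (G.neighborSet u).ncard ∧ 3 ≤ (G.neighborSet v).ncard)

/-- The induced subgraph of `G` on `X ∪ {a, b}` is exactly a path from `a` to `b`:
there is an induced path from `a` to `b` whose support is `X ∪ {a, b}` and which carries
all edges of `G` inside this set. -/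
def SimpleGraph.InduceIsPathFromTo {V : Type*} (G : SimpleGraph V) (X : Set V) (a b : V) :
    Prop :=
  ∃ p : G.Walk a b, p.IsPath ∧ {v | v ∈ p.support} = X ∪ {a, b} ∧
    ∀ u w : V, u ∈ p.support → w ∈ p.support → G.Adj u w → s(u, w) ∈ p.edges

namespace SimpleGraph

variable {V : Type*} {G : SimpleGraph V}

namespace Walk

variable {u v : V}

lemma IsPath.mk_notMem_edges_of_one_lt_length {p : G.Walk u v} (hp : p.IsPath)
    (hlen : 1 < p.length) : s(u, v) ∉ p.edges :=
  fun h => by have := hp.length_eq_one_of_mem_edges h; omega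

lemma IsPath.isCycle_append_of_mem_support {p : G.Walk u v} {q : G.Walk v u} (hp : p.IsPath)
    (hq : q.IsPath) (hn : 1 < p.length ∨ 1 < q.length)
    (h : ∀ x ∈ p.support, x ∈ q.support → x = u ∨ x = v) : (p.append q).IsCycle := by
  refine hp.isCycle_append hq (fun x hxp hxq => ?_) hn
  have hnp := hp.support_nodup
  have hnq := hq.support_nodup
  rw [← cons_tail_support] at hnp hnq
  rcases h x (List.mem_of_mem_tail hxp) (List.mem_of_mem_tail hxq) with rfl | rfl
  · exact (List.nodup_cons.mp hnp).1 hxp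
  · exact (List.nodup_cons.mp hnq).1 hxq

lemma exists_isPath_first_mem {x y : V} (p : G.Walk x y) {S : Set V} (hy : y ∈ S) :
    ∃ z ∈ S, ∃ R : G.Walk x z, R.IsPath ∧ (∀ t ∈ R.support, t ∈ S → t = z) ∧
      R.support ⊆ p.support := by
  classical
  suffices ∃ z ∈ S, ∃ R : G.Walk x z, (∀ t ∈ R.support, t ∈ S → t = z) ∧
      R.support ⊆ p.support by
    obtain ⟨z, hz, R, hRS, hRp⟩ := this
    exact ⟨z, hz, R.bypass, R.bypass_isPath,
      fun t ht => hRS t (R.support_bypass_subset_support ht),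
      fun t ht => hRp (R.support_bypass_subset_support ht)⟩
  induction p with
  | nil => exact ⟨_, hy, nil, by simp, List.Subset.refl _⟩
  | @cons x x' y h p ih =>
    by_cases hx : x ∈ S
    · exact ⟨x, hx, nil, by simp, by simp⟩
    obtain ⟨z, hz, R, hRS, hRp⟩ := ih hy
    refine ⟨z, hz, cons h R, ?_, ?_⟩
    · simp only [support_cons, List.mem_cons, forall_eq_or_imp]
      exact ⟨fun hxS => absurd hxS hx, hRS⟩
    · simpa using List.subset_cons_of_subset _ hRp

lemma IsCycle.exists_isPath_mem_support {r : V} {c : G.Walk r r} (hc : c.IsCycle) {x y z : V}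
    (hx : x ∈ c.support) (hy : y ∈ c.support) (hz : z ∈ c.support) (hxy : x ≠ y) :
    ∃ B : G.Walk x y, B.IsPath ∧ z ∈ B.support ∧ B.support ⊆ c.support := by
  classical
  set D := c.rotate x hx
  have hyD : y ∈ D.support := by simpa [D] using hy
  have hzD : z ∈ D.support := by simpa [D] using hz
  have hDc : D.support ⊆ c.support := fun t ht => by simpa [D] using ht
  have hD : ((D.takeUntil y hyD).append (D.dropUntil y hyD)).IsCycle := by
    rw [D.take_spec hyD]; exact hc.rotate hx
  rw [← D.take_spec hyD, mem_support_append_iff] at hzD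
  rcases hzD with hz | hz
  · exact ⟨_, hD.isPath_of_append_left (not_nil_of_ne hxy.symm), hz,
      fun t ht => hDc (D.support_takeUntil_subset_support hyD ht)⟩
  · refine ⟨_, (hD.isPath_of_append_right (not_nil_of_ne hxy)).reverse, by simpa using hz, ?_⟩
    intro t ht
    rw [support_reverse, List.mem_reverse] at ht
    exact hDc (D.support_dropUntil_subset_support hyD ht)

lemma IsPath.ncard_neighborSet_toSubgraph_eq_two {p : G.Walk u v} (hp : p.IsPath) {z : V}
    (hz : z ∈ p.support) (hzu : z ≠ u) (hzv : z ≠ v) :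
    (p.toSubgraph.neighborSet z).ncard = 2 := by
  obtain ⟨i, rfl, hi⟩ := mem_support_iff_exists_getVert.mp hz
  refine hp.ncard_neighborSet_toSubgraph_internal_eq_two (fun h => hzu ?_) ?_
  · simp [h]
  · exact lt_of_le_of_ne hi (fun h => hzv (by simp [h]))

end Walk

def OnCommonCycle (G : SimpleGraph V) (u v : V) : Prop :=
  ∃ (r : V) (c : G.Walk r r), c.IsCycle ∧ u ∈ c.support ∧ v ∈ c.support

variable {u u' v : V}

open Walk

lemma onCommonCycle_of_adj_of_adj (h : G.Adj u u') (h' : G.Adj u' v) (huv : u ≠ v)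
    (q : G.Walk u v) (hq : u' ∉ q.support) : G.OnCommonCycle u v := by
  classical
  have hback : (cons h'.symm (cons h.symm nil) : G.Walk v u).IsPath := by
    simp [h.ne', h'.ne', huv.symm]
  refine ⟨u, _, q.bypass_isPath.isCycle_append_of_mem_support hback (Or.inr (by simp)) ?_,
    by simp, by simp⟩
  intro x hxq hx
  simp only [support_cons, support_nil, List.mem_cons, List.not_mem_nil, or_false] at hx
  rcases hx with rfl | rfl | rfl
  · exact Or.inr rfl
  · exact absurd (q.support_bypass_subset_support hxq) hq
  · exact Or.inl rfl

/-- The new cycle follows `q` from `u` to its first vertex `z` on `c`, then the arc of `c` from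
`z` through `v` to `u'`, and closes with the edge `u'u`. -/
lemma onCommonCycle_of_isCycle_of_adj {r : V} {c : G.Walk r r} (hc : c.IsCycle)
    (hu'c : u' ∈ c.support) (hvc : v ∈ c.support) (huc : u ∉ c.support) (h : G.Adj u u')
    (q : G.Walk u v) (hq : u' ∉ q.support) : G.OnCommonCycle u v := by
  obtain ⟨z, hzc, R, hR, hRc, hRq⟩ := q.exists_isPath_first_mem (S := {t | t ∈ c.support}) hvc
  have hzu' : z ≠ u' := fun hz => hq (hRq (hz ▸ R.end_mem_support))
  obtain ⟨B, hB, hvB, hBc⟩ := hc.exists_isPath_mem_support hzc hu'c hvc hzu'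
  have hB' : (B.concat h.symm).IsPath := hB.concat (fun hu => huc (hBc hu)) h.symm
  have hBlen : 1 < (B.concat h.symm).length := by
    have : B.length ≠ 0 := fun h0 => hzu' (eq_of_length_eq_zero h0)
    rw [length_concat]; omega
  refine ⟨u, _, hR.isCycle_append_of_mem_support hB' (Or.inr hBlen) ?_, by simp, by simp [hvB]⟩
  intro x hxR hxB
  rw [support_concat, List.mem_append, List.mem_singleton] at hxB
  rcases hxB with hxB | rfl
  · exact Or.inr (hRc x hxR (hBc hxB))
  · exact Or.inl rfl

/-- The two-vertex case of Menger's theorem, by induction along a `u`–`v` path: a cycle through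
the next vertex `u'` and `v` is rerouted through `u`, using a `u`–`v` walk that avoids `u'`. -/
lemma adj_or_onCommonCycle_of_isPath (p : G.Walk u v) (hp : p.IsPath) (huv : u ≠ v)
    (hsep : ∀ w, w ≠ u → w ≠ v → ∃ q : G.Walk u v, w ∉ q.support) :
    G.Adj u v ∨ G.OnCommonCycle u v := by
  induction p with
  | nil => exact absurd rfl huv
  | @cons u u' v h p ih =>
    obtain ⟨hp, hup⟩ := cons_isPath_iff _ _ |>.mp hp
    by_cases hu'v : u' = v
    · subst hu'v
      exact Or.inl h
    right
    have hsep' : ∀ w, w ≠ u' → w ≠ v → ∃ q : G.Walk u' v, w ∉ q.support := by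
      intro w hwu' hwv
      by_cases hwu : w = u
      · exact ⟨p, hwu ▸ hup⟩
      obtain ⟨q, hq⟩ := hsep w hwu hwv
      exact ⟨cons h.symm q, by simp [hwu', hq]⟩
    obtain ⟨q, hq⟩ := hsep u' h.ne' hu'v
    rcases ih hp hu'v hsep' with hadj | ⟨r, c, hc, hu'c, hvc⟩
    · exact onCommonCycle_of_adj_of_adj h hadj huv q hq
    · by_cases huc : u ∈ c.support
      · exact ⟨r, c, hc, huc, hvc⟩
      · exact onCommonCycle_of_isCycle_of_adj hc hu'c hvc huc h q hq

theorem onCommonCycle_of_forall_exists_walk_notMem (huv : u ≠ v) (hadj : ¬ G.Adj u v)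
    (hreach : G.Reachable u v)
    (hsep : ∀ w, w ≠ u → w ≠ v → ∃ q : G.Walk u v, w ∉ q.support) : G.OnCommonCycle u v := by
  classical
  obtain ⟨p⟩ := hreach
  exact (adj_or_onCommonCycle_of_isPath p.bypass p.bypass_isPath huv hsep).resolve_left hadj

variable {X : Set V} {a b : V}

lemma InduceIsPathFromTo.ncard_neighborSet_inter_le_one (h : G.InduceIsPathFromTo X a b) :
    (G.neighborSet a ∩ (X ∪ {a, b})).ncard ≤ 1 := by
  obtain ⟨p, hp, hsupp, hind⟩ := h
  calc (G.neighborSet a ∩ (X ∪ {a, b})).ncard ≤ ({p.snd} : Set V).ncard := by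
        refine Set.ncard_le_ncard (fun y ⟨hay, hy⟩ => ?_)
        rw [← hsupp] at hy
        exact Set.mem_singleton_iff.mpr
          (hp.eq_snd_of_mem_edges (hind a y p.start_mem_support hy hay))
    _ = 1 := Set.ncard_singleton _

lemma InduceIsPathFromTo.ncard_neighborSet_inter_le_two (h : G.InduceIsPathFromTo X a b)
    {z : V} (hz : z ∈ X) (hza : z ≠ a) (hzb : z ≠ b) :
    (G.neighborSet z ∩ (X ∪ {a, b})).ncard ≤ 2 := by
  obtain ⟨p, hp, hsupp, hind⟩ := h
  have hzp : z ∈ {v | v ∈ p.support} := hsupp ▸ Or.inl hz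
  calc (G.neighborSet z ∩ (X ∪ {a, b})).ncard ≤ (p.toSubgraph.neighborSet z).ncard := by
        refine Set.ncard_le_ncard (fun y ⟨hzy, hy⟩ => ?_) (p.finite_neighborSet_toSubgraph)
        rw [← hsupp] at hy
        exact Walk.adj_toSubgraph_iff_mem_edges.mpr (hind z y hzp hy hzy)
    _ = 2 := hp.ncard_neighborSet_toSubgraph_eq_two hzp hza hzb

lemma IsChordless.mem_edges_of_isPath (hc : G.IsChordless) {p : G.Walk u v} (hp : p.IsPath)
    (hlen : 1 < p.length) (hvu : G.Adj v u) {x y : V} (hx : x ∈ p.support)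
    (hy : y ∈ p.support) (hxy : G.Adj x y) : s(x, y) ∈ p.edges ∨ s(x, y) = s(v, u) := by
  have hcyc : (p.append hvu.toWalk).IsCycle :=
    hp.isCycle_append_of_mem_support (by simp [hvu.ne]) (Or.inl hlen)
      fun x _ hx => by simpa [or_comm] using hx
  simpa using hc u _ hcyc x y (by simp [hx]) (by simp [hy]) hxy

lemma IsChordless.not_onCommonCycle_deleteEdges (hc : G.IsChordless) (huv : G.Adj u v) :
    ¬ (G.deleteEdges {s(u, v)}).OnCommonCycle u v := by
  rintro ⟨r, c, hcyc, hu, hv⟩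
  have hmem := hc r (c.mapLe (deleteEdges_le _)) (hcyc.mapLe _) u v (by simpa) (by simpa) huv
  rw [edges_mapLe_eq_edges] at hmem
  simpa using c.edges_subset_edgeSet hmem

lemma exists_walk_notMem_support {z x y : V} (h : (G.induce {z}ᶜ).Preconnected) (hx : x ≠ z)
    (hy : y ≠ z) : ∃ p : G.Walk x y, z ∉ p.support := by
  obtain ⟨W⟩ := h ⟨x, hx⟩ ⟨y, hy⟩
  refine ⟨W.map (Embedding.induce _).toHom, fun hz => ?_⟩
  obtain ⟨⟨t, ht⟩, -, htz⟩ := List.mem_map.mp (W.support_map _ ▸ hz)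
  exact ht htz

lemma exists_isPath_one_lt_length_snd_ne (h2 : ∀ z, (G.induce {z}ᶜ).Preconnected)
    (huv : G.Adj u v) (hu : 3 ≤ (G.neighborSet u).ncard) (w : V) :
    ∃ p : G.Walk u v, p.IsPath ∧ 1 < p.length ∧ p.snd ≠ w := by
  classical
  obtain ⟨x, hux : G.Adj u x, hx⟩ : ∃ x ∈ G.neighborSet u, x ∉ ({v, w} : Set V) :=
    Set.exists_mem_notMem_of_ncard_lt_ncard ((Set.ncard_insert_le _ _).trans_lt (by simpa))
  simp only [Set.mem_insert_iff, Set.mem_singleton_iff, not_or] at hx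
  obtain ⟨P, hP⟩ := exists_walk_notMem_support (h2 u) hux.ne' huv.ne'
  have hPu : u ∉ P.bypass.support := fun h => hP (P.support_bypass_subset_support h)
  refine ⟨cons hux P.bypass, (cons_isPath_iff _ _).mpr ⟨P.bypass_isPath, hPu⟩, ?_,
    by simpa using hx.2⟩
  have : P.bypass.length ≠ 0 := fun h0 => hx.1 (eq_of_length_eq_zero h0)
  rw [length_cons]; omega

lemma IsChordless.not_adj_of_forall_mem_support (hc : G.IsChordless)
    (h2 : ∀ z, (G.induce {z}ᶜ).Preconnected) (huv : G.Adj u v)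
    (hu : 3 ≤ (G.neighborSet u).ncard) {w : V} (hwu : w ≠ u) (hwv : w ≠ v)
    (hsep : ∀ q : (G.deleteEdges {s(u, v)}).Walk u v, w ∈ q.support) : ¬ G.Adj u w := by
  intro huw
  obtain ⟨p, hp, hlen, hsnd⟩ := exists_isPath_one_lt_length_snd_ne h2 huv hu w
  have hw : w ∈ p.support := by
    simpa using hsep (p.toDeleteEdge _ (hp.mk_notMem_edges_of_one_lt_length hlen))
  rcases hc.mem_edges_of_isPath hp hlen huv.symm p.start_mem_support hw huw with h | h
  · exact hsnd (hp.eq_snd_of_mem_edges h).symm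
  · simp [hwu, hwv] at h

def IsProperTwoCutset (G : SimpleGraph V) (a b : V) : Prop :=
  a ≠ b ∧ ¬ G.Adj a b ∧
    ∃ X Y : Set V, X.Nonempty ∧ Y.Nonempty ∧ Disjoint X Y ∧
      X ∪ Y = ({a, b} : Set V)ᶜ ∧
      (∀ x ∈ X, ∀ y ∈ Y, ¬ G.Adj x y) ∧
      ¬ G.InduceIsPathFromTo X a b ∧ ¬ G.InduceIsPathFromTo Y a b

lemma isProperTwoCutset_of_three_le_ncard {c z : V} {Y : Set V} (hab : a ≠ b)
    (hnab : ¬ G.Adj a b) (hXY : Disjoint X Y) (hXYab : X ∪ Y = ({a, b} : Set V)ᶜ)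
    (hE : ∀ x ∈ X, ∀ y ∈ Y, ¬ G.Adj x y) (ha : 3 ≤ (G.neighborSet a).ncard)
    (haX : G.neighborSet a \ {c} ⊆ X) (hz : 3 ≤ (G.neighborSet z).ncard) (hzY : z ∈ Y)
    (hzY' : G.neighborSet z ⊆ Y ∪ {a, b}) : G.IsProperTwoCutset a b := by
  have hzab : z ∉ ({a, b} : Set V) := by rw [← Set.mem_compl_iff, ← hXYab]; exact Or.inr hzY
  simp only [Set.mem_insert_iff, Set.mem_singleton_iff, not_or] at hzab
  have hfin_a := Set.finite_of_ncard_pos (by omega : 0 < (G.neighborSet a).ncard)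
  have hfin_z := Set.finite_of_ncard_pos (by omega : 0 < (G.neighborSet z).ncard)
  have ha' : 2 ≤ (G.neighborSet a \ {c}).ncard :=
    le_trans (by omega) (Set.pred_ncard_le_ncard_sdiff_singleton _ c)
  refine ⟨hab, hnab, X, Y, ?_, ⟨z, hzY⟩, hXY, hXYab, hE, fun hX => ?_, fun hY => ?_⟩
  · exact (Set.nonempty_of_ncard_ne_zero (by omega)).mono haX
  · have hsub : G.neighborSet a \ {c} ⊆ G.neighborSet a ∩ (X ∪ {a, b}) :=
      fun y hy => ⟨hy.1, Or.inl (haX hy)⟩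
    have := Set.ncard_le_ncard hsub (hfin_a.inter_of_left _)
    have := hX.ncard_neighborSet_inter_le_one
    omega
  · have hsub : G.neighborSet z ⊆ G.neighborSet z ∩ (Y ∪ {a, b}) := fun y hy => ⟨hy, hzY' hy⟩
    have := Set.ncard_le_ncard hsub (hfin_z.inter_of_left _)
    have := hY.ncard_neighborSet_inter_le_two hzY hzab.1 hzab.2
    omega

lemma isProperTwoCutset_of_forall_mem_support (huv : G.Adj u v)
    (hu : 3 ≤ (G.neighborSet u).ncard) (hv : 3 ≤ (G.neighborSet v).ncard) {w : V}
    (hwu : w ≠ u) (huw : ¬ G.Adj u w)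
    (hsep : ∀ q : (G.deleteEdges {s(u, v)}).Walk u v, w ∈ q.support) :
    G.IsProperTwoCutset u w := by
  set H := G.deleteEdges {s(u, v)}
  have hwv : w ≠ v := fun h => huw (h ▸ huv)
  have hH : ∀ x y, G.Adj x y → x ≠ u → x ≠ v → H.Adj x y := fun x y h hxu hxv =>
    deleteEdges_adj.mpr ⟨h, by simp [hxu, hxv]⟩
  set U : Set V := {z | ∃ q : H.Walk u z, w ∉ q.support}
  have hU : ∀ z ∈ U, ∀ y, H.Adj z y → y ≠ w → y ∈ U := by
    rintro z ⟨q, hq⟩ y hzy hyw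
    exact ⟨q.concat hzy, by simp [hq, hyw.symm]⟩
  have huU : u ∈ U := ⟨nil, by simpa using hwu⟩
  have hwU : w ∉ U := fun ⟨q, hq⟩ => hq q.end_mem_support
  have hvU : v ∉ U := fun ⟨q, hq⟩ => hq (hsep q)
  refine isProperTwoCutset_of_three_le_ncard (X := U \ {u}) (Y := (U ∪ {w})ᶜ) (c := v)
    hwu.symm huw (Set.disjoint_left.mpr fun z hzX hzY => hzY (Or.inl hzX.1)) ?_ ?_ hu ?_ hv
    (by simp [hvU, hwv.symm]) ?_
  · ext z
    by_cases hzU : z ∈ U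
    · simp [hzU, show z ≠ w from fun h => hwU (h ▸ hzU)]
    · simp [hzU, show z ≠ u from fun h => hzU (h ▸ huU)]
  · rintro x ⟨hxU, hxu⟩ y hyY hxy
    have hxv : x ≠ v := fun h => hvU (h ▸ hxU)
    exact hyY (Or.inl (hU x hxU y (hH x y hxy hxu hxv) fun h => hyY (Or.inr h)))
  · rintro y ⟨huy, hyv : y ≠ v⟩
    have hHuy : H.Adj u y := deleteEdges_adj.mpr ⟨huy, by simp [hyv, huv.ne]⟩
    exact ⟨hU u huU y hHuy (fun h => huw (h ▸ huy)), huy.ne'⟩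
  · intro y (hvy : G.Adj v y)
    by_cases hyu : y = u
    · exact Or.inr (Or.inl hyu)
    by_cases hyw : y = w
    · exact Or.inr (Or.inr hyw)
    refine Or.inl fun hy => hy.elim (fun hyU => ?_) hyw
    exact hvU (hU y hyU v (hH y v hvy.symm hyu hvy.ne') hwv.symm)

lemma IsChordless.exists_isProperTwoCutset (hc : G.IsChordless)
    (h2 : ∀ z, (G.induce {z}ᶜ).Preconnected) (huv : G.Adj u v)
    (hu : 3 ≤ (G.neighborSet u).ncard) (hv : 3 ≤ (G.neighborSet v).ncard) :
    ∃ a b, G.IsProperTwoCutset a b := by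
  obtain ⟨p, hp, hlen, -⟩ := exists_isPath_one_lt_length_snd_ne h2 huv hu u
  obtain ⟨w, hwu, hwv, hsep⟩ : ∃ w, w ≠ u ∧ w ≠ v ∧
      ∀ q : (G.deleteEdges {s(u, v)}).Walk u v, w ∈ q.support := by
    by_contra! h
    refine hc.not_onCommonCycle_deleteEdges huv
      (onCommonCycle_of_forall_exists_walk_notMem huv.ne (by simp) ⟨p.toDeleteEdge _ ?_⟩ h)
    exact hp.mk_notMem_edges_of_one_lt_length hlen
  exact ⟨u, w, isProperTwoCutset_of_forall_mem_support huv hu hv hwu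
    (hc.not_adj_of_forall_mem_support h2 huv hu hwu hwv hsep) hsep⟩

end SimpleGraph

theorem chordless_decomposition_general {V : Type*} (G : SimpleGraph V)
    (hc : G.IsChordless) :
    G.IsSparse ∨
      (∃ v : V, ¬ (G.induce {v}ᶜ).Preconnected) ∨
      (∃ a b : V, a ≠ b ∧ ¬ G.Adj a b ∧
        ∃ X Y : Set V, X.Nonempty ∧ Y.Nonempty ∧ Disjoint X Y ∧
          X ∪ Y = ({a, b} : Set V)ᶜ ∧
          (∀ x ∈ X, ∀ y ∈ Y, ¬ G.Adj x y) ∧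
          ¬ G.InduceIsPathFromTo X a b ∧ ¬ G.InduceIsPathFromTo Y a b) := by
  by_cases hs : G.IsSparse
  · exact Or.inl hs
  by_cases h2 : ∃ z : V, ¬ (G.induce {z}ᶜ).Preconnected
  · exact Or.inr (Or.inl h2)
  push Not at h2
  obtain ⟨u, v, huv, hu, hv⟩ : ∃ u v, G.Adj u v ∧ 3 ≤ (G.neighborSet u).ncard ∧
      3 ≤ (G.neighborSet v).ncard := by
    simpa [IsSparse] using hs
  exact Or.inr (Or.inr (hc.exists_isProperTwoCutset h2 huv hu hv))

/-- Every chordless graph is sparse, or has a 1-cutset, or has a proper 2-cutset. -/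
theorem chordless_decomposition {V : Type*} [Fintype V] (G : SimpleGraph V)
    (hc : G.IsChordless) :
    G.IsSparse ∨
      (∃ v : V, ¬ (G.induce {v}ᶜ).Preconnected) ∨
      (∃ a b : V, a ≠ b ∧ ¬ G.Adj a b ∧
        ∃ X Y : Set V, X.Nonempty ∧ Y.Nonempty ∧ Disjoint X Y ∧
          X ∪ Y = ({a, b} : Set V)ᶜ ∧
          (∀ x ∈ X, ∀ y ∈ Y, ¬ G.Adj x y) ∧
          ¬ G.InduceIsPathFromTo X a b ∧ ¬ G.InduceIsPathFromTo Y a b) :=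
  chordless_decomposition_general G hc
end

section
/- Every chordless graph on at least one vertex contains a vertex of degree at most 2, and consequently every chordless graph is 3-colorable. -/
/-!
Let `p` be a longest path in `G`, starting at `a`. Every neighbour of `a` lies on `p`, for
otherwise `p` could be extended. Walking along `p` from its far end towards `a`, let `w` be the
first neighbour of `a` met; the segment of `p` from `a` to `w` together with the edge `w a` is a
cycle through every neighbour of `a`. Since that cycle has no chord, each neighbour of `a` is one of
the two cycle-neighbours of `a`, so `a` has degree at most `2`. Chordlessness is inherited by
induced subgraphs, so `G` is `2`-degenerate, and greedy colouring uses `3` colours.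
-/

open SimpleGraph

namespace SimpleGraph

variable {V W : Type*} {G : SimpleGraph V}

theorem IsChordless.comap {H : SimpleGraph W} (f : H ↪g G) (hc : G.IsChordless) :
    H.IsChordless := by
  intro v c hcyc u w hu hw hadj
  have hcyc' : (c.map f.toHom).IsCycle := hcyc.map f.injective
  have hmem := hc _ (c.map f.toHom) hcyc' (f u) (f w)
    (by simpa [Walk.support_map]) (by simpa [Walk.support_map])
    (f.map_rel_iff.mpr hadj)
  rw [Walk.edges_map, List.mem_map] at hmem
  obtain ⟨e, he, hfe⟩ := hmem
  rwa [← Sym2.map.injective f.injective (hfe.trans (Sym2.map_mk _ _ _).symm)]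

theorem IsChordless.induce (hc : G.IsChordless) (s : Set V) : (G.induce s).IsChordless :=
  hc.comap (Embedding.induce s)

theorem ncard_neighborSet_induce (s : Set V) (v : s) :
    ((G.induce s).neighborSet v).ncard = (G.neighborSet v ∩ s).ncard := by
  rw [← Set.ncard_image_of_injective _ Subtype.val_injective]
  congr 1
  ext x
  simp [and_comm]

theorem IsChordless.neighborSet_inter_support_subset (hc : G.IsChordless) {w a : V}
    {q : G.Walk w a} (hq : q.IsPath) (haw : G.Adj a w) :
    G.neighborSet a ∩ {x | x ∈ q.support} ⊆ {w, q.penultimate} := by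
  rintro x ⟨hax, hxq⟩
  by_cases hwa : s(w, a) ∈ q.edges
  · rw [hq.eq_adj_toWalk_of_mem_edges hwa] at hxq
    simp only [Adj.toWalk, Walk.support_cons, Walk.support_nil, List.mem_cons,
      List.not_mem_nil, or_false] at hxq
    rcases hxq with rfl | rfl
    · exact .inl rfl
    · exact absurd hax (G.irrefl)
  · have hcyc : (Walk.cons haw q).IsCycle :=
      (Walk.cons_isCycle_iff q haw).mpr ⟨hq, by rwa [Sym2.eq_swap]⟩
    have hchord := hc a _ hcyc a x (Walk.start_mem_support _)
      (List.mem_cons_of_mem _ hxq) hax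
    rw [Walk.edges_cons, List.mem_cons] at hchord
    rcases hchord with h | h
    · exact .inl (Sym2.congr_right.mp h)
    · exact .inr (hq.eq_penultimate_of_mem_edges h)

theorem IsChordless.ncard_neighborSet_le_two_of_isPath (hc : G.IsChordless) {w a : V}
    (q : G.Walk w a) (hq : q.IsPath) (hN : G.neighborSet a ⊆ {x | x ∈ q.support}) :
    (G.neighborSet a).ncard ≤ 2 := by
  induction q with
  | @nil a =>
    have : G.neighborSet a = ∅ := by
      refine Set.eq_empty_of_forall_notMem fun x hx => ?_
      have hxa : x = a := by simpa using hN hx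
      exact G.irrefl (hxa ▸ hx)
    simp [this]
  | @cons w y a hwy q ih =>
    rw [Walk.cons_isPath_iff] at hq
    by_cases haw : G.Adj a w
    · have hsub : G.neighborSet a ⊆ {w, (Walk.cons hwy q).penultimate} :=
        fun x hx => hc.neighborSet_inter_support_subset (hq.1.cons hq.2) haw ⟨hx, hN hx⟩
      exact (Set.ncard_le_ncard hsub).trans ((Set.ncard_insert_le _ _).trans (by simp))
    · refine ih hq.1 fun x hx => ?_
      have hx' := hN hx
      simp only [Set.mem_ofPred_eq, Walk.support_cons, List.mem_cons] at hx'
      rcases hx' with rfl | hx'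
      · exact absurd hx haw
      · exact hx'

theorem IsChordless.exists_ncard_neighborSet_le_two [Nonempty V] [Finite G.edgeSet]
    (hc : G.IsChordless) : ∃ v : V, (G.neighborSet v).ncard ≤ 2 := by
  obtain ⟨a, b, p, hp, hlongest⟩ := Walk.exists_isPath_forall_isPath_length_le_length G
  refine ⟨a, hc.ncard_neighborSet_le_two_of_isPath p.reverse (Walk.isPath_reverse_iff p |>.mpr hp)
    fun x hxa => ?_⟩
  rw [Set.mem_ofPred_eq, Walk.support_reverse, List.mem_reverse]
  by_contra hx
  have := hlongest _ _ _ (hp.cons hx (h := hxa.symm))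
  rw [Walk.length_cons] at this
  omega

def IsDegenerate (G : SimpleGraph V) (k : ℕ) : Prop :=
  ∀ s : Finset V, s.Nonempty → ∃ v ∈ s, (G.neighborSet v ∩ s).ncard ≤ k

theorem IsDegenerate.exists_coloring_on {k : ℕ} (h : G.IsDegenerate k) (s : Finset V) :
    ∃ c : V → Fin (k + 1), ∀ u ∈ s, ∀ w ∈ s, G.Adj u w → c u ≠ c w := by
  classical
  induction s using Finset.strongInduction with
  | H s ih =>
  rcases s.eq_empty_or_nonempty with rfl | hs
  · exact ⟨0, by simp⟩
  obtain ⟨v, hvs, hv⟩ := h s hs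
  obtain ⟨c, hc⟩ := ih (s.erase v) (Finset.erase_ssubset hvs)
  have hused : (c '' (G.neighborSet v ∩ s)).ncard ≤ k :=
    (Set.ncard_image_le (s.finite_toSet.inter_of_right _)).trans hv
  obtain ⟨a, ha⟩ : ∃ a, a ∉ c '' (G.neighborSet v ∩ s) := by
    by_contra! hall
    rw [Set.eq_univ_of_forall hall, Set.ncard_univ, Nat.card_eq_fintype_card,
      Fintype.card_fin] at hused
    omega
  refine ⟨Function.update c v a, fun u hu w hw huw => ?_⟩
  rcases eq_or_ne u v with rfl | huv
  · rw [Function.update_self, Function.update_of_ne (G.ne_of_adj huw).symm]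
    exact fun haw => ha ⟨w, ⟨huw, hw⟩, haw.symm⟩
  rcases eq_or_ne w v with rfl | hwv
  · rw [Function.update_self, Function.update_of_ne huv]
    exact fun hua => ha ⟨u, ⟨huw.symm, hu⟩, hua⟩
  rw [Function.update_of_ne huv, Function.update_of_ne hwv]
  exact hc u (Finset.mem_erase.mpr ⟨huv, hu⟩) w (Finset.mem_erase.mpr ⟨hwv, hw⟩) huw

theorem IsDegenerate.colorable [Finite V] {k : ℕ} (h : G.IsDegenerate k) :
    G.Colorable (k + 1) := by
  have := Fintype.ofFinite V
  obtain ⟨c, hc⟩ := h.exists_coloring_on .univ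
  exact ⟨Coloring.mk c fun huw => hc _ (Finset.mem_univ _) _ (Finset.mem_univ _) huw⟩

theorem IsChordless.isDegenerate_two (hc : G.IsChordless) : G.IsDegenerate 2 := by
  intro s hs
  have : Nonempty (s : Set V) := hs.to_subtype
  obtain ⟨⟨v, hv⟩, hdeg⟩ := (hc.induce s).exists_ncard_neighborSet_le_two
  exact ⟨v, hv, ncard_neighborSet_induce (G := G) s ⟨v, hv⟩ ▸ hdeg⟩

end SimpleGraph

/-- Every chordless graph on at least one vertex has a vertex of degree at most 2, and
every chordless graph is 3-colorable. -/
theorem chordless_min_degree_and_three_colorable {V : Type*} [Fintype V] (G : SimpleGraph V)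
    (hc : G.IsChordless) :
    (Nonempty V → ∃ v : V, (G.neighborSet v).ncard ≤ 2) ∧ G.Colorable 3 :=
  ⟨fun _ => hc.exists_ncard_neighborSet_le_two, hc.isDegenerate_two.colorable⟩
end

section
/- A graph G is the line graph of a triangle-free graph if and only if G contains no claw and no diamond as induced subgraphs. -/
/-!
An edge of `L(H)` has only two endpoints, so two of any three of its neighbours share one: line
graphs are claw-free. If `H` is triangle-free, three pairwise adjacent edges of `H` share a
vertex; in a diamond of `L(H)` the two triangles then give vertices `v`, `w`, and either `v = w`
makes the two tips adjacent, or both middle edges are the edge `vw`.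

Conversely, without an induced diamond every edge `uv` of `G` lies in a unique maximal clique,
namely `u`, `v` and their common neighbours; without an induced claw as well, every vertex lies
in one or two maximal cliques. The root graph has as vertices the maximal cliques of `G` and a
private vertex `inr v` for each `v`, and `v` becomes the edge joining its two maximal cliques, or
its only one and `inr v`. Three pairwise meeting maximal cliques would meet in three distinct,
pairwise adjacent vertices, which lie in a single maximal clique; so the root graph is
triangle-free.
-/

open SimpleGraph

/-- The claw `K_{1,3}`. -/
def clawGraph : SimpleGraph (Fin 1 ⊕ Fin 3) := completeBipartiteGraph (Fin 1) (Fin 3)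

/-- The diamond: `K₄` minus one edge. -/
def diamondGraph : SimpleGraph (Fin 4) where
  Adj x y := x ≠ y ∧ ¬ (x = 0 ∧ y = 1) ∧ ¬ (x = 1 ∧ y = 0)
  symm := by
    refine ⟨?_⟩
    rintro x y ⟨h1, h2, h3⟩
    exact ⟨h1.symm, fun ⟨a, b⟩ => h3 ⟨b, a⟩, fun ⟨a, b⟩ => h2 ⟨b, a⟩⟩
  loopless := by
    refine ⟨?_⟩
    rintro x ⟨h, -, -⟩
    exact h rfl

namespace SimpleGraph

variable {V W : Type*} {G : SimpleGraph V}

theorem isEmpty_clawGraph_embedding_lineGraph (H : SimpleGraph W) :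
    IsEmpty (clawGraph ↪g H.lineGraph) := by
  refine ⟨fun f => ?_⟩
  have hleaf : ∀ i, H.lineGraph.Adj (f (.inl 0)) (f (.inr i)) := fun i =>
    f.map_adj_iff.mpr (by simp [clawGraph])
  induction h : (f (.inl 0) : Sym2 W) using Sym2.ind with | _ a b => ?_
  have hab : ∀ i, ∃ x, (x = a ∨ x = b) ∧ x ∈ (f (.inr i) : Sym2 W) := fun i => by
    obtain ⟨-, x, hx, hxi⟩ := lineGraph_adj_iff_exists.mp (hleaf i)
    exact ⟨x, by rwa [h, Sym2.mem_iff] at hx, hxi⟩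
  choose g hg using hab
  -- pigeonhole on whether the leaf meets the centre in `a`
  obtain ⟨i, j, hij, hgij⟩ := Fintype.exists_ne_map_eq_of_card_lt (fun i => g i = a) (by simp)
  have hgij : g i = g j := by grind
  have : H.lineGraph.Adj (f (.inr i)) (f (.inr j)) := lineGraph_adj_iff_exists.mpr
    ⟨f.injective.ne (by simpa using hij), g i, (hg i).2, hgij ▸ (hg j).2⟩
  simpa [clawGraph] using f.map_adj_iff.mp this

theorem CliqueFree.exists_mem_of_lineGraph_adj {H : SimpleGraph W} (hH : H.CliqueFree 3)
    {e f g : H.edgeSet} (hef : H.lineGraph.Adj e f) (heg : H.lineGraph.Adj e g)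
    (hfg : H.lineGraph.Adj f g) :
    ∃ x, x ∈ (e : Sym2 W) ∧ x ∈ (f : Sym2 W) ∧ x ∈ (g : Sym2 W) := by
  classical
  obtain ⟨-, a, hae, haf⟩ := lineGraph_adj_iff_exists.mp hef
  obtain ⟨-, b, hbe, hbg⟩ := lineGraph_adj_iff_exists.mp heg
  obtain ⟨-, c, hcf, hcg⟩ := lineGraph_adj_iff_exists.mp hfg
  by_contra! hnone
  have hab : a ≠ b := by rintro rfl; exact hnone a hae haf hbg
  have hac : a ≠ c := by rintro rfl; exact hnone a hae haf hcg
  have hbc : b ≠ c := by rintro rfl; exact hnone b hbe hcf hbg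
  have hE : (e : Sym2 W) = s(a, b) := (Sym2.mem_and_mem_iff hab).mp ⟨hae, hbe⟩
  have hF : (f : Sym2 W) = s(a, c) := (Sym2.mem_and_mem_iff hac).mp ⟨haf, hcf⟩
  have hG : (g : Sym2 W) = s(b, c) := (Sym2.mem_and_mem_iff hbc).mp ⟨hbg, hcg⟩
  exact hH {a, b, c} <| is3Clique_triple_iff.mpr ⟨H.mem_edgeSet.mp (hE ▸ e.2),
    H.mem_edgeSet.mp (hF ▸ f.2), H.mem_edgeSet.mp (hG ▸ g.2)⟩

theorem CliqueFree.isEmpty_diamondGraph_embedding_lineGraph {H : SimpleGraph W}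
    (hH : H.CliqueFree 3) : IsEmpty (diamondGraph ↪g H.lineGraph) := by
  refine ⟨fun f => ?_⟩
  have hadj (i j : Fin 4) (h : diamondGraph.Adj i j := by simp [diamondGraph]) :
      H.lineGraph.Adj (f i) (f j) :=
    f.map_adj_iff.mpr h
  obtain ⟨v, hv0, hv2, hv3⟩ := hH.exists_mem_of_lineGraph_adj (hadj 0 2) (hadj 0 3) (hadj 2 3)
  obtain ⟨w, hw1, hw2, hw3⟩ := hH.exists_mem_of_lineGraph_adj (hadj 1 2) (hadj 1 3) (hadj 2 3)
  by_cases hvw : v = w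
  · subst hvw
    have : H.lineGraph.Adj (f 0) (f 1) :=
      lineGraph_adj_iff_exists.mpr ⟨f.injective.ne (by decide), v, hv0, hw1⟩
    exact absurd (f.map_adj_iff.mp this) (by simp [diamondGraph])
  · have h23 : f 2 = f 3 := Subtype.ext <| ((Sym2.mem_and_mem_iff hvw).mp ⟨hv2, hw2⟩).trans
      ((Sym2.mem_and_mem_iff hvw).mp ⟨hv3, hw3⟩).symm
    exact absurd (f.injective h23) (by decide)

theorem adj_or_adj_of_isEmpty_clawGraph_embedding (h : IsEmpty (clawGraph ↪g G)) {v a b c : V}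
    (ha : G.Adj v a) (hb : G.Adj v b) (hc : G.Adj v c) (hab : ¬ G.Adj a b) (hne : a ≠ b)
    (hca : c ≠ a) (hcb : c ≠ b) : G.Adj a c ∨ G.Adj b c := by
  by_contra! ⟨hac, hbc⟩
  refine h.false ⟨⟨Sum.elim (fun _ => v) ![a, b, c], ?_⟩, ?_⟩
  · rintro (x | x) (y | y) hxy <;> fin_cases x <;> fin_cases y <;>
      simp_all [ha.ne, hb.ne, hc.ne, ha.ne', hb.ne', hc.ne', eq_comm]
  · intro x y
    change G.Adj (Sum.elim _ ![a, b, c] x) (Sum.elim _ ![a, b, c] y) ↔ _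
    rcases x with x | x <;> rcases y with y | y <;> fin_cases x <;> fin_cases y <;>
      simp_all [clawGraph, adj_comm]

theorem adj_of_isEmpty_diamondGraph_embedding (h : IsEmpty (diamondGraph ↪g G)) {u v a b : V}
    (huv : G.Adj u v) (hua : G.Adj u a) (hva : G.Adj v a) (hub : G.Adj u b) (hvb : G.Adj v b)
    (hab : a ≠ b) : G.Adj a b := by
  by_contra hnab
  refine h.false ⟨⟨![a, b, u, v], ?_⟩, ?_⟩
  · intro x y hxy
    fin_cases x <;> fin_cases y <;>
      simp_all [huv.ne, hua.ne, hva.ne, hub.ne, hvb.ne, huv.ne', hua.ne', hva.ne', hub.ne', hvb.ne']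
  · intro x y
    change G.Adj (![a, b, u, v] x) (![a, b, u, v] y) ↔ _
    fin_cases x <;> fin_cases y <;> simp_all [diamondGraph, adj_comm]

def edgeClique (G : SimpleGraph V) (u v : V) : Set V := insert u (insert v (G.commonNeighbors u v))

theorem mem_edgeClique {u v w : V} :
    w ∈ G.edgeClique u v ↔ w = u ∨ w = v ∨ G.Adj u w ∧ G.Adj v w := Iff.rfl

theorem edgeClique_comm (u v : V) : G.edgeClique u v = G.edgeClique v u := by
  ext w; simp only [mem_edgeClique]; tauto

theorem left_mem_edgeClique (u v : V) : u ∈ G.edgeClique u v := Or.inl rfl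

theorem IsClique.subset_edgeClique {S : Set V} (hS : G.IsClique S) {u v : V} (hu : u ∈ S)
    (hv : v ∈ S) : S ⊆ G.edgeClique u v := by
  intro w hw
  by_cases hwu : w = u
  · exact Or.inl hwu
  by_cases hwv : w = v
  · exact Or.inr (Or.inl hwv)
  exact Or.inr (Or.inr ⟨hS hu hw (Ne.symm hwu), hS hv hw (Ne.symm hwv)⟩)

theorem isClique_edgeClique (hdiamond : IsEmpty (diamondGraph ↪g G)) {u v : V}
    (huv : G.Adj u v) : G.IsClique (G.edgeClique u v) := by
  rintro x (rfl | rfl | ⟨hux, hvx⟩) y (rfl | rfl | ⟨huy, hvy⟩) hxy <;>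
    first
    | exact absurd rfl hxy
    | assumption
    | exact Adj.symm ‹_›
    | exact adj_of_isEmpty_diamondGraph_embedding hdiamond huv hux hvx huy hvy hxy

theorem maximal_isClique_edgeClique (hdiamond : IsEmpty (diamondGraph ↪g G)) {u v : V}
    (huv : G.Adj u v) : Maximal G.IsClique (G.edgeClique u v) :=
  ⟨isClique_edgeClique hdiamond huv, fun _ hT hsub =>
    hT.subset_edgeClique (hsub (left_mem_edgeClique u v)) (hsub (Or.inr (Or.inl rfl)))⟩

theorem eq_edgeClique_of_maximal_isClique (hdiamond : IsEmpty (diamondGraph ↪g G))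
    {S : Set V} (hS : Maximal G.IsClique S) {u v : V} (hu : u ∈ S) (hv : v ∈ S)
    (huv : u ≠ v) :
    S = G.edgeClique u v :=
  hS.eq_of_subset (isClique_edgeClique hdiamond (hS.prop hu hv huv))
    (hS.prop.subset_edgeClique hu hv)

theorem maximal_isClique_eq_of_mem (hdiamond : IsEmpty (diamondGraph ↪g G)) {S T : Set V}
    (hS : Maximal G.IsClique S) (hT : Maximal G.IsClique T) {u v : V} (huS : u ∈ S)
    (hvS : v ∈ S) (huT : u ∈ T) (hvT : v ∈ T) (huv : u ≠ v) : S = T :=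
  (eq_edgeClique_of_maximal_isClique hdiamond hS huS hvS huv).trans
    (eq_edgeClique_of_maximal_isClique hdiamond hT huT hvT huv).symm

theorem maximal_isClique_insert_neighborSet {v : V} (h : G.IsClique (G.neighborSet v)) :
    Maximal G.IsClique (insert v (G.neighborSet v)) :=
  ⟨h.insert fun _ hw _ => hw, fun T hT hsub t ht => by
    by_cases htv : t = v
    · exact Or.inl htv
    · exact Or.inr (hT (hsub (Set.mem_insert v _)) ht (Ne.symm htv))⟩

theorem exists_not_adj_of_not_isClique_neighborSet {v : V}
    (h : ¬ G.IsClique (G.neighborSet v)) :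
    ∃ p : V × V, G.Adj v p.1 ∧ G.Adj v p.2 ∧ p.1 ≠ p.2 ∧ ¬ G.Adj p.1 p.2 := by
  simp only [IsClique, Set.Pairwise, not_forall] at h
  obtain ⟨a, ha, b, hb, hab, hnab⟩ := h
  exact ⟨(a, b), ha, hb, hab, hnab⟩

open Classical in
noncomputable def ends (G : SimpleGraph V) (v : V) : Sym2 (Set V ⊕ V) :=
  if h : G.IsClique (G.neighborSet v) then s(.inl (insert v (G.neighborSet v)), .inr v)
  else
    let p := (exists_not_adj_of_not_isClique_neighborSet h).choose
    s(.inl (G.edgeClique v p.1), .inl (G.edgeClique v p.2))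

theorem ends_of_isClique {v : V} (h : G.IsClique (G.neighborSet v)) :
    G.ends v = s(.inl (insert v (G.neighborSet v)), .inr v) := by
  rw [ends, dif_pos h]

theorem exists_ends_of_not_isClique {v : V} (h : ¬ G.IsClique (G.neighborSet v)) :
    ∃ a b, G.Adj v a ∧ G.Adj v b ∧ a ≠ b ∧ ¬ G.Adj a b ∧
      G.ends v = s(.inl (G.edgeClique v a), .inl (G.edgeClique v b)) :=
  have hp := (exists_not_adj_of_not_isClique_neighborSet h).choose_spec
  ⟨_, _, hp.1, hp.2.1, hp.2.2.1, hp.2.2.2, by rw [ends, dif_neg h]⟩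

theorem ends_not_isDiag (v : V) : ¬ (G.ends v).IsDiag := by
  by_cases h : G.IsClique (G.neighborSet v)
  · simp [ends_of_isClique h]
  · obtain ⟨a, b, hva, hvb, hab, hnab, hends⟩ := exists_ends_of_not_isClique h
    rw [hends, Sym2.mk_isDiag_iff, Sum.inl.injEq]
    intro heq
    have hb : b ∈ G.edgeClique v a := heq ▸ Or.inr (Or.inl rfl)
    rcases hb with hbv | hba | ⟨-, hab'⟩
    · exact hvb.ne hbv.symm
    · exact hab hba.symm
    · exact hnab hab'

theorem eq_of_inr_mem_ends {v w : V} (h : .inr w ∈ G.ends v) : w = v := by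
  by_cases hv : G.IsClique (G.neighborSet v)
  · simpa [ends_of_isClique hv] using h
  · obtain ⟨a, b, -, -, -, -, hends⟩ := exists_ends_of_not_isClique hv
    simp [hends] at h

theorem maximal_isClique_of_inl_mem_ends (hdiamond : IsEmpty (diamondGraph ↪g G)) {v : V}
    {S : Set V} (h : .inl S ∈ G.ends v) : v ∈ S ∧ Maximal G.IsClique S := by
  by_cases hv : G.IsClique (G.neighborSet v)
  · obtain rfl : S = insert v (G.neighborSet v) := by simpa [ends_of_isClique hv] using h
    exact ⟨Set.mem_insert v _, maximal_isClique_insert_neighborSet hv⟩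
  · obtain ⟨a, b, hva, hvb, -, -, hends⟩ := exists_ends_of_not_isClique hv
    rw [hends, Sym2.mem_iff, Sum.inl.injEq, Sum.inl.injEq] at h
    rcases h with rfl | rfl
    · exact ⟨left_mem_edgeClique v a, maximal_isClique_edgeClique hdiamond hva⟩
    · exact ⟨left_mem_edgeClique v b, maximal_isClique_edgeClique hdiamond hvb⟩

theorem exists_maximal_isClique_of_mem_ends (hdiamond : IsEmpty (diamondGraph ↪g G)) {u v : V}
    {x : Set V ⊕ V} (hu : x ∈ G.ends u) (hv : x ∈ G.ends v) (huv : u ≠ v) :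
    ∃ S, x = .inl S ∧ Maximal G.IsClique S ∧ u ∈ S ∧ v ∈ S := by
  rcases x with S | w
  · obtain ⟨huS, hS⟩ := maximal_isClique_of_inl_mem_ends hdiamond hu
    exact ⟨S, rfl, hS, huS, (maximal_isClique_of_inl_mem_ends hdiamond hv).1⟩
  · exact absurd ((eq_of_inr_mem_ends hu).symm.trans (eq_of_inr_mem_ends hv)) huv

theorem adj_of_mem_ends_of_mem_ends (hdiamond : IsEmpty (diamondGraph ↪g G)) {u v : V}
    {x : Set V ⊕ V} (hu : x ∈ G.ends u) (hv : x ∈ G.ends v) (huv : u ≠ v) : G.Adj u v := by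
  obtain ⟨S, -, hS, huS, hvS⟩ := exists_maximal_isClique_of_mem_ends hdiamond hu hv huv
  exact hS.prop huS hvS huv

theorem ends_injective (hdiamond : IsEmpty (diamondGraph ↪g G)) : Function.Injective G.ends := by
  intro u v huv
  by_contra hne
  have hdiag := ends_not_isDiag (G := G) u
  induction h : G.ends u using Sym2.ind with | _ x y => ?_
  rw [h, Sym2.mk_isDiag_iff] at hdiag
  -- `x` and `y` would be two maximal cliques sharing the two vertices `u` and `v`
  obtain ⟨S, rfl, hS, huS, hvS⟩ := exists_maximal_isClique_of_mem_ends hdiamond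
    (h ▸ Sym2.mem_mk_left x y) (huv ▸ h ▸ Sym2.mem_mk_left x y) hne
  obtain ⟨T, rfl, hT, huT, hvT⟩ := exists_maximal_isClique_of_mem_ends hdiamond
    (h ▸ Sym2.mem_mk_right _ y) (huv ▸ h ▸ Sym2.mem_mk_right _ y) hne
  exact hdiag (congrArg _ (maximal_isClique_eq_of_mem hdiamond hS hT huS hvS huT hvT hne))

theorem inl_edgeClique_mem_ends (hclaw : IsEmpty (clawGraph ↪g G))
    (hdiamond : IsEmpty (diamondGraph ↪g G)) {u v : V} (huv : G.Adj u v) :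
    .inl (G.edgeClique u v) ∈ G.ends u := by
  by_cases hu : G.IsClique (G.neighborSet u)
  · rw [ends_of_isClique hu, eq_edgeClique_of_maximal_isClique hdiamond
      (maximal_isClique_insert_neighborSet hu) (Set.mem_insert u _) (Or.inr huv) huv.ne]
    exact Sym2.mem_mk_left _ _
  · obtain ⟨a, b, hua, hub, hab, hnab, hends⟩ := exists_ends_of_not_isClique hu
    rw [hends, Sym2.mem_iff, Sum.inl.injEq, Sum.inl.injEq]
    -- `v` is adjacent or equal to `a` or `b`, else `u, a, b, v` would form a claw
    have hv : v = a ∨ v = b ∨ G.Adj a v ∨ G.Adj b v := by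
      by_contra! ⟨hva, hvb, hnav, hnbv⟩
      exact (adj_or_adj_of_isEmpty_clawGraph_embedding hclaw hua hub huv hnab hab hva
        hvb).elim hnav hnbv
    rcases hv with rfl | rfl | hav | hbv
    · exact Or.inl rfl
    · exact Or.inr rfl
    · exact Or.inl (eq_edgeClique_of_maximal_isClique hdiamond
        (maximal_isClique_edgeClique hdiamond hua) (left_mem_edgeClique u a)
        (Or.inr (Or.inr ⟨huv, hav⟩)) huv.ne).symm
    · exact Or.inr (eq_edgeClique_of_maximal_isClique hdiamond
        (maximal_isClique_edgeClique hdiamond hub) (left_mem_edgeClique u b)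
        (Or.inr (Or.inr ⟨huv, hbv⟩)) huv.ne).symm

noncomputable def rootGraph (G : SimpleGraph V) : SimpleGraph (Set V ⊕ V) :=
  fromEdgeSet (Set.range G.ends)

theorem ends_mem_edgeSet_rootGraph (v : V) : G.ends v ∈ G.rootGraph.edgeSet := by
  rw [rootGraph, edgeSet_fromEdgeSet]
  exact ⟨⟨v, rfl⟩, ends_not_isDiag v⟩

theorem cliqueFree_three_rootGraph (hdiamond : IsEmpty (diamondGraph ↪g G)) :
    G.rootGraph.CliqueFree 3 := by
  classical
  intro t ht
  obtain ⟨A, B, C, hAB, hAC, hBC, -⟩ := is3Clique_iff.mp ht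
  obtain ⟨⟨u, hu⟩, hAB⟩ := fromEdgeSet_adj _ |>.mp hAB
  obtain ⟨⟨v, hv⟩, hBC⟩ := fromEdgeSet_adj _ |>.mp hBC
  obtain ⟨⟨w, hw⟩, hAC⟩ := fromEdgeSet_adj _ |>.mp hAC
  have huv : u ≠ v := by rintro rfl; grind [Sym2.eq_iff]
  have huw : u ≠ w := by rintro rfl; grind [Sym2.eq_iff]
  have hvw : v ≠ w := by rintro rfl; grind [Sym2.eq_iff]
  obtain ⟨SA, rfl, hSA, huA, hwA⟩ := exists_maximal_isClique_of_mem_ends hdiamond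
    (hu ▸ Sym2.mem_mk_left A B) (hw ▸ Sym2.mem_mk_left A C) huw
  obtain ⟨SB, rfl, hSB, huB, hvB⟩ := exists_maximal_isClique_of_mem_ends hdiamond
    (hu ▸ Sym2.mem_mk_right _ B) (hv ▸ Sym2.mem_mk_left B C) huv
  obtain ⟨SC, rfl, hSC, hvC, hwC⟩ := exists_maximal_isClique_of_mem_ends hdiamond
    (hv ▸ Sym2.mem_mk_right _ C) (hw ▸ Sym2.mem_mk_right _ C) hvw
  -- `w` is adjacent to both `u` and `v`, so it lies in `SB`, the clique of the edge `uv`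
  have hwB : w ∈ SB := eq_edgeClique_of_maximal_isClique hdiamond hSB huB hvB huv ▸
    Or.inr (Or.inr ⟨hSA.prop huA hwA huw, hSC.prop hvC hwC hvw⟩)
  exact hAB (congrArg _ (maximal_isClique_eq_of_mem hdiamond hSA hSB huA hwA huB hwB huw))

noncomputable def isoLineGraphRootGraph (hclaw : IsEmpty (clawGraph ↪g G))
    (hdiamond : IsEmpty (diamondGraph ↪g G)) : G ≃g G.rootGraph.lineGraph where
  toEquiv := Equiv.ofBijective (fun v => ⟨G.ends v, ends_mem_edgeSet_rootGraph v⟩)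
    ⟨fun _ _ h => ends_injective hdiamond (congrArg Subtype.val h), by
      rintro ⟨e, he⟩
      rw [rootGraph, edgeSet_fromEdgeSet] at he
      obtain ⟨⟨v, rfl⟩, -⟩ := he
      exact ⟨v, rfl⟩⟩
  map_rel_iff' {u v} := by
    rw [lineGraph_adj_iff_exists]
    refine ⟨fun ⟨hne, x, hu, hv⟩ => adj_of_mem_ends_of_mem_ends hdiamond hu hv ?_,
      fun huv => ?_⟩
    · rintro rfl
      exact hne rfl
    · refine ⟨fun h => (ends_injective hdiamond).ne huv.ne (congrArg Subtype.val h),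
        .inl (G.edgeClique u v), inl_edgeClique_mem_ends hclaw hdiamond huv, ?_⟩
      rw [edgeClique_comm]
      exact inl_edgeClique_mem_ends hclaw hdiamond huv.symm

end SimpleGraph

theorem lineGraph_of_triangleFree_iff_general {V : Type u} (G : SimpleGraph V) :
    (∃ (W : Type u) (H : SimpleGraph W), H.CliqueFree 3 ∧ Nonempty (G ≃g H.lineGraph)) ↔
      IsEmpty (clawGraph ↪g G) ∧ IsEmpty (diamondGraph ↪g G) := by
  constructor
  · rintro ⟨W, H, hH, ⟨e⟩⟩
    exact ⟨⟨fun f => H.isEmpty_clawGraph_embedding_lineGraph.false (e.toEmbedding.comp f)⟩,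
      ⟨fun f => hH.isEmpty_diamondGraph_embedding_lineGraph.false (e.toEmbedding.comp f)⟩⟩
  · rintro ⟨hclaw, hdiamond⟩
    exact ⟨_, G.rootGraph, cliqueFree_three_rootGraph hdiamond,
      ⟨isoLineGraphRootGraph hclaw hdiamond⟩⟩

/-- A graph is the line graph of a triangle-free graph iff it contains no induced claw
and no induced diamond. -/
theorem lineGraph_of_triangleFree_iff {V : Type u} [Fintype V] (G : SimpleGraph V) :
    (∃ (W : Type u) (H : SimpleGraph W), H.CliqueFree 3 ∧ Nonempty (G ≃g H.lineGraph)) ↔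
      IsEmpty (clawGraph ↪g G) ∧ IsEmpty (diamondGraph ↪g G) :=
  lineGraph_of_triangleFree_iff_general G
end

section
/- If G is a graph of girth at least k+1 and x_1, …, x_k are vertices of G, then every induced subgraph H of G that is connected, contains x_1, …, x_k, and is vertex-minimal with respect to these properties, is a tree. -/
/-! Let `H` be the minimal induced subgraph and `C` a cycle in it. For each vertex `v` of `C`, the
vertices reachable from `C - v` by walks avoiding `v` induce a connected proper subgraph of `H`,
so by minimality some terminal lies outside it, i.e. is cut off from `C` by `v`. In a connected
graph, distinct vertices of `C` cut off disjoint sets, so `C` has at most `k` vertices, which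
is less than the girth. -/

open SimpleGraph

namespace SimpleGraph

variable {V : Type*} {G : SimpleGraph V}

lemma induce_connected_of_forall_exists_walk {s : Set V} {c : V} (hc : c ∈ s)
    (h : ∀ z ∈ s, ∃ p : G.Walk z c, ∀ y ∈ p.support, y ∈ s) : (G.induce s).Connected :=
  G.induce_connected_of_patches c hc fun {z} hz => by
    obtain ⟨p, hp⟩ := h z hz
    exact ⟨_, hp, p.end_mem_support, p.start_mem_support,
      (p.connected_induce_support).preconnected _ _⟩

noncomputable def induceInduceIso (s : Set V) (t : Set s) :
    (G.induce s).induce t ≃g G.induce (Subtype.val '' t) where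
  toEquiv := Equiv.Set.image Subtype.val t Subtype.val_injective
  map_rel_iff' := Iff.rfl

lemma Walk.IsCycle.exists_walk_snd_avoiding {v y : V} {c : G.Walk v v} (hc : c.IsCycle)
    (hy : y ∈ c.support) (hyv : y ≠ v) : ∃ p : G.Walk y c.snd, v ∉ p.support := by
  classical
  have hy' : y ∈ c.tail.support := by
    rw [← Walk.cons_support_tail hc.not_nil] at hy
    exact (List.mem_cons.mp hy).resolve_left hyv
  refine ⟨(c.tail.takeUntil y hy').reverse, ?_⟩
  rw [Walk.support_reverse, List.mem_reverse]
  exact Walk.endpoint_notMem_support_takeUntil hc.isPath_tail hy' hyv.symm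

lemma Walk.IsCycle.encard_support {a : V} {c : G.Walk a a} (hc : c.IsCycle) :
    {u | u ∈ c.support}.encard = c.length := by
  classical
  have hsupp : {u | u ∈ c.support} = (c.support.tail.toFinset : Set V) := by
    ext u
    simp only [Set.mem_ofPred_eq, List.coe_toFinset]
    rw [← Walk.cons_tail_support, List.mem_cons]
    exact ⟨fun h => h.elim (· ▸ Walk.end_mem_tail_support hc.not_nil) id, Or.inr⟩
  rw [hsupp, Set.encard_coe_eq_coe_finsetCard, List.toFinset_card_of_nodup hc.support_nodup,
    List.length_tail, Walk.length_support, Nat.add_sub_cancel]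

variable (G) in
def cutOff (S : Set V) (v : V) : Set V :=
  {b | ∀ u ∈ S, ∀ p : G.Walk b u, v ∈ p.support}

lemma disjoint_cutOff (hG : G.Preconnected) {S : Set V} {v w : V} (hv : v ∈ S) (hw : w ∈ S)
    (hvw : v ≠ w) : Disjoint (G.cutOff S v) (G.cutOff S w) := by
  classical
  refine Set.disjoint_left.mpr fun b hbv hbw => ?_
  obtain ⟨p⟩ := hG b v
  have hwp : w ∈ p.support := hbw v hv p
  have hvp : v ∈ (p.takeUntil w hwp).support := hbv w hw _
  exact Walk.notMem_support_takeUntil_support_takeUntil_subset hvw hwp hvp (hbw v hv _)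

variable {X : Set V}

lemma exists_forall_walk_mem_support_of_minimal
    (hmin : ∀ t : Set V, (G.induce t).Connected → X ⊆ t → t = Set.univ)
    {v c : V} (hcv : c ≠ v) : ∃ x ∈ X, ∀ p : G.Walk x c, v ∈ p.support := by
  classical
  by_contra! h
  set t := {z | ∃ p : G.Walk z c, v ∉ p.support}
  have ht : (G.induce t).Connected := by
    refine induce_connected_of_forall_exists_walk (c := c) ⟨.nil, by simpa using hcv.symm⟩ ?_
    rintro z ⟨p, hp⟩
    exact ⟨p, fun y hy =>
      ⟨p.dropUntil y hy, fun hv => hp (p.support_dropUntil_subset_support hy hv)⟩⟩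
  obtain ⟨p, hp⟩ : v ∈ t := hmin t ht h ▸ Set.mem_univ v
  exact hp p.start_mem_support

lemma Walk.IsCycle.exists_mem_cutOff_of_minimal
    (hmin : ∀ t : Set V, (G.induce t).Connected → X ⊆ t → t = Set.univ)
    {a v : V} {c : G.Walk a a} (hc : c.IsCycle) (hv : v ∈ c.support) :
    (X ∩ G.cutOff {u | u ∈ c.support} v).Nonempty := by
  classical
  set r := c.rotate v hv
  have hr : r.IsCycle := hc.rotate hv
  obtain ⟨x, hxX, hx⟩ :=
    exists_forall_walk_mem_support_of_minimal hmin (r.adj_snd hr.not_nil).ne'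
  refine ⟨x, hxX, fun u hu p => ?_⟩
  by_contra hvp
  have huv : u ≠ v := by rintro rfl; exact hvp p.end_mem_support
  obtain ⟨q, hq⟩ := hr.exists_walk_snd_avoiding ((c.mem_support_rotate_iff v hv).mpr hu) huv
  rcases (Walk.mem_support_append_iff p q).mp (hx (p.append q)) with h | h
  exacts [hvp h, hq h]

theorem Walk.IsCycle.length_le_encard_of_minimal (hG : G.Preconnected)
    (hmin : ∀ t : Set V, (G.induce t).Connected → X ⊆ t → t = Set.univ)
    {a : V} {c : G.Walk a a} (hc : c.IsCycle) : (c.length : ℕ∞) ≤ X.encard := by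
  choose! f hfX hfcut using fun v (hv : v ∈ {u | u ∈ c.support}) =>
    hc.exists_mem_cutOff_of_minimal hmin hv
  rw [← hc.encard_support]
  refine Set.encard_le_encard_of_injOn hfX fun v hv w hw hfvw => ?_
  by_contra hvw
  exact Set.disjoint_left.mp (disjoint_cutOff hG hv hw hvw) (hfcut v hv) (hfvw ▸ hfcut w hw)

end SimpleGraph

theorem minimal_connected_induced_is_tree_general {V : Type*} (G : SimpleGraph V)
    (k : ℕ) (x : Fin k → V) (hgirth : (k + 1 : ℕ∞) ≤ G.egirth)
    (s : Set V) (hconn : (G.induce s).Connected) (hx : ∀ i, x i ∈ s)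
    (hmin : ∀ t : Set V, t ⊂ s → ¬ ((G.induce t).Connected ∧ ∀ i, x i ∈ t)) :
    (G.induce s).IsTree := by
  refine ⟨hconn, fun a c hc => ?_⟩
  set X : Set s := Set.range fun i => ⟨x i, hx i⟩ with hX
  have hmin' : ∀ t : Set s, ((G.induce s).induce t).Connected → X ⊆ t → t = Set.univ := by
    intro t ht hXt
    by_contra hne
    obtain ⟨z, hz⟩ := (Set.ne_univ_iff_exists_notMem t).mp hne
    refine hmin _ ⟨Subtype.coe_image_subset s t, fun hst => hz ?_⟩
      ⟨(induceInduceIso s t).connected_iff.mp ht, fun i => ⟨_, hXt ⟨i, rfl⟩, rfl⟩⟩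
    obtain ⟨z', hz', hzz'⟩ := hst z.2
    exact Subtype.ext hzz' ▸ hz'
  have : (k + 1 : ℕ∞) ≤ k := calc
    (k + 1 : ℕ∞) ≤ G.egirth := hgirth
    _ ≤ (G.induce s).egirth := IsContained.egirth_le ⟨Copy.induce G s⟩
    _ ≤ c.length := egirth_le_length hc
    _ ≤ X.encard := hc.length_le_encard_of_minimal hconn.preconnected hmin'
    _ ≤ (Set.univ : Set (Fin k)).encard := hX ▸ Set.image_univ ▸ Set.encard_image_le _ _
    _ = k := by simp
  exact absurd (by exact_mod_cast this : k + 1 ≤ k) (by omega)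

/-- If `G` has girth at least `k + 1` and `x₁, …, x_k` are vertices of `G`, then every
connected induced subgraph of `G` containing all the `xᵢ` and vertex-minimal with these
properties is a tree. -/
theorem minimal_connected_induced_is_tree {V : Type*} [Fintype V] (G : SimpleGraph V)
    (k : ℕ) (x : Fin k → V) (hgirth : (k + 1 : ℕ∞) ≤ G.egirth)
    (s : Set V) (hconn : (G.induce s).Connected) (hx : ∀ i, x i ∈ s)
    (hmin : ∀ t : Set V, t ⊂ s → ¬ ((G.induce t).Connected ∧ ∀ i, x i ∈ t)) :
    (G.induce s).IsTree :=
  minimal_connected_induced_is_tree_general G k x hgirth s hconn hx hmin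
end
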